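/- arXiv:2107.11546 — 6 statements merged into one kernel-verified Lean document; each statement's English description precedes it below -/
import Mathlib

section
/- The null set H₀ is a closed subset of (𝓕×𝓕, d₂); its boundary satisfies bd(H₀) = {(F,G) ∈ 𝓕×𝓕 : sup_{x∈D_p(F,G)} (F(x) − G(x)) = 0}; moreover bd(H₀) = bd(H₁); and the interior of H₀ is int(H₀) = {(F,G) ∈ 𝓕×𝓕 : F(z) > G(z) for some z ∈ D_p(F,G)}. -/
open Filter Topology

/-- Generalized inverse (quantile function) of a distribution function. -/
noncomputable def qinv (K : ℝ → ℝ) (t : ℝ) : ℝ := sInf {x | t ≤ K x}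

/-- `D_p(F,G) = [H⁻¹(p), H⁻¹(1−p)]` with `H = λF + (1−λ)G`. -/
noncomputable def Dp (lam p : ℝ) (F G : ℝ → ℝ) : Set ℝ :=
  Set.Icc (qinv (fun x => lam * F x + (1 - lam) * G x) p)
          (qinv (fun x => lam * F x + (1 - lam) * G x) (1 - p))

/-- The space 𝓕 of continuous cumulative distribution functions on ℝ, as a subspace
of the bounded continuous functions with the uniform (sup) metric. -/
abbrev CDF : Type := {F : BoundedContinuousFunction ℝ ℝ //
  Monotone ⇑F ∧ Tendsto ⇑F atBot (𝓝 0) ∧ Tendsto ⇑F atTop (𝓝 1)}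

/-- `sup_{x ∈ D_p(F,G)} (F(x) − G(x))`. -/
noncomputable def supDiff (lam p : ℝ) (FG : CDF × CDF) : ℝ :=
  sSup ((fun x => FG.1.1 x - FG.2.1 x) '' Dp lam p ⇑FG.1.1 ⇑FG.2.1)

/-- The null hypothesis set `H₀ = {(F,G) : sup_{x∈D_p}(F(x)−G(x)) ≥ 0}`. -/
def H0 (lam p : ℝ) : Set (CDF × CDF) := {FG | 0 ≤ supDiff lam p FG}

/-- The alternative hypothesis set `H₁ = {(F,G) : sup_{x∈D_p}(F(x)−G(x)) < 0}`. -/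
def H1 (lam p : ℝ) : Set (CDF × CDF) := {FG | supDiff lam p FG < 0}

section qinvlemmas
variable {K : ℝ → ℝ} {t : ℝ}

lemma qinv_set_nonempty (hK1 : Tendsto K atTop (𝓝 1)) (ht : t < 1) :
    {x | t ≤ K x}.Nonempty := by
  obtain ⟨x, hx⟩ := (hK1.eventually (eventually_gt_nhds ht)).exists
  exact ⟨x, hx.le⟩

lemma qinv_set_bddBelow (hKm : Monotone K) (hK0 : Tendsto K atBot (𝓝 0)) (ht : 0 < t) :
    BddBelow {x | t ≤ K x} := by
  obtain ⟨x0, hx0⟩ := (hK0.eventually (eventually_lt_nhds ht)).exists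
  exact ⟨x0, fun y hy => not_lt.1 fun h => ((hy.trans (hKm h.le)).not_gt hx0)⟩

lemma qinv_mem (hKm : Monotone K) (hKc : Continuous K) (hK0 : Tendsto K atBot (𝓝 0))
    (hK1 : Tendsto K atTop (𝓝 1)) (ht : t ∈ Set.Ioo (0:ℝ) 1) : t ≤ K (qinv K t) :=
  (isClosed_le continuous_const hKc).csInf_mem (qinv_set_nonempty hK1 ht.2)
    (qinv_set_bddBelow hKm hK0 ht.1)

lemma apply_qinv (hKm : Monotone K) (hKc : Continuous K) (hK0 : Tendsto K atBot (𝓝 0))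
    (hK1 : Tendsto K atTop (𝓝 1)) (ht : t ∈ Set.Ioo (0:ℝ) 1) : K (qinv K t) = t := by
  refine le_antisymm ?_ (qinv_mem hKm hKc hK0 hK1 ht)
  by_contra hcon
  push_neg at hcon
  have hev : ∀ᶠ x in 𝓝 (qinv K t), t < K x :=
    hKc.continuousAt.eventually (eventually_gt_nhds hcon)
  have hev2 : ∀ᶠ x in 𝓝[<] (qinv K t), t < K x ∧ x < qinv K t :=
    (hev.filter_mono nhdsWithin_le_nhds).and self_mem_nhdsWithin
  obtain ⟨x, hx, hxlt⟩ := hev2.exists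
  exact absurd (csInf_le (qinv_set_bddBelow hKm hK0 ht.1) hx.le) (not_le.2 hxlt)

lemma qinv_le (hKm : Monotone K) (hK0 : Tendsto K atBot (𝓝 0)) (ht : 0 < t) {x : ℝ}
    (h : t ≤ K x) : qinv K t ≤ x :=
  csInf_le (qinv_set_bddBelow hKm hK0 ht) h

lemma qinv_mono (hKm : Monotone K) (hK0 : Tendsto K atBot (𝓝 0))
    (hK1 : Tendsto K atTop (𝓝 1)) {t₁ t₂ : ℝ} (ht₁ : 0 < t₁) (ht₂ : t₂ < 1) (h : t₁ ≤ t₂) :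
    qinv K t₁ ≤ qinv K t₂ :=
  csInf_le_csInf (qinv_set_bddBelow hKm hK0 ht₁) (qinv_set_nonempty hK1 ht₂)
    (fun x hx => le_trans h hx)

lemma cdf_nonneg (hKm : Monotone K) (hK0 : Tendsto K atBot (𝓝 0)) (x : ℝ) : 0 ≤ K x :=
  le_of_tendsto hK0 ((eventually_le_atBot x).mono fun _ hy => hKm hy)

lemma cdf_le_one (hKm : Monotone K) (hK1 : Tendsto K atTop (𝓝 1)) (x : ℝ) : K x ≤ 1 :=
  ge_of_tendsto hK1 ((eventually_ge_atTop x).mono fun _ hy => hKm hy)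

end qinvlemmas

section mixf
variable {lam p : ℝ}

noncomputable def mixf (lam : ℝ) (Fc Gc : CDF) : ℝ → ℝ :=
  fun x => lam * Fc.1 x + (1 - lam) * Gc.1 x

lemma mixf_monotone (hlam : lam ∈ Set.Ioo (0:ℝ) 1) (Fc Gc : CDF) :
    Monotone (mixf lam Fc Gc) := fun x y h => by
  have h1 := Fc.2.1 h
  have h2 := Gc.2.1 h
  simp only [mixf]
  nlinarith [hlam.1, hlam.2]

lemma mixf_continuous (Fc Gc : CDF) : Continuous (mixf lam Fc Gc) := by
  unfold mixf
  fun_prop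

lemma mixf_tendsto0 (Fc Gc : CDF) : Tendsto (mixf lam Fc Gc) atBot (𝓝 0) := by
  have := (Fc.2.2.1.const_mul lam).add (Gc.2.2.1.const_mul (1 - lam))
  simp only [mul_zero, add_zero] at this
  exact this

lemma mixf_tendsto1 (Fc Gc : CDF) : Tendsto (mixf lam Fc Gc) atTop (𝓝 1) := by
  have := (Fc.2.2.2.const_mul lam).add (Gc.2.2.2.const_mul (1 - lam))
  have h : lam * 1 + (1 - lam) * 1 = 1 := by ring
  rw [h] at this
  exact this

lemma Dp_eq (Fc Gc : CDF) :
    Dp lam p ⇑Fc.1 ⇑Gc.1 =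
      Set.Icc (qinv (mixf lam Fc Gc) p) (qinv (mixf lam Fc Gc) (1 - p)) := rfl

lemma mixf_qinv_apply (hlam : lam ∈ Set.Ioo (0:ℝ) 1) (Fc Gc : CDF) {t : ℝ}
    (ht : t ∈ Set.Ioo (0:ℝ) 1) :
    mixf lam Fc Gc (qinv (mixf lam Fc Gc) t) = t :=
  apply_qinv (mixf_monotone hlam Fc Gc) (mixf_continuous Fc Gc) (mixf_tendsto0 Fc Gc)
    (mixf_tendsto1 Fc Gc) ht

lemma hp_facts (hp : p ∈ Set.Ioo (0:ℝ) (1/2)) :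
    p ∈ Set.Ioo (0:ℝ) 1 ∧ (1 - p) ∈ Set.Ioo (0:ℝ) 1 ∧ p ≤ 1 - p := by
  obtain ⟨h1, h2⟩ := hp
  refine ⟨⟨h1, by linarith⟩, ⟨by linarith, by linarith⟩, by linarith⟩

lemma qinv_p_le (hlam : lam ∈ Set.Ioo (0:ℝ) 1) (hp : p ∈ Set.Ioo (0:ℝ) (1/2)) (Fc Gc : CDF) :
    qinv (mixf lam Fc Gc) p ≤ qinv (mixf lam Fc Gc) (1 - p) :=
  qinv_mono (mixf_monotone hlam Fc Gc) (mixf_tendsto0 Fc Gc) (mixf_tendsto1 Fc Gc)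
    hp.1 (hp_facts hp).2.1.2 (hp_facts hp).2.2

lemma supDiff_le (hlam : lam ∈ Set.Ioo (0:ℝ) 1) (hp : p ∈ Set.Ioo (0:ℝ) (1/2))
    {Fc Gc : CDF} {c : ℝ}
    (h : ∀ x ∈ Dp lam p ⇑Fc.1 ⇑Gc.1, Fc.1 x - Gc.1 x ≤ c) :
    supDiff lam p (Fc, Gc) ≤ c := by
  refine csSup_le ?_ ?_
  · exact ⟨_, ⟨qinv (mixf lam Fc Gc) p, ⟨le_refl _, qinv_p_le hlam hp Fc Gc⟩, rfl⟩⟩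
  · rintro y ⟨x, hx, rfl⟩
    exact h x hx

lemma le_supDiff {Fc Gc : CDF} {x : ℝ} (hx : x ∈ Dp lam p ⇑Fc.1 ⇑Gc.1) :
    Fc.1 x - Gc.1 x ≤ supDiff lam p (Fc, Gc) := by
  refine le_csSup ⟨1, ?_⟩ ⟨x, hx, rfl⟩
  rintro y ⟨z, hz, rfl⟩
  have h1 := cdf_le_one Fc.2.1 Fc.2.2.2 z
  have h2 := cdf_nonneg Gc.2.1 Gc.2.2.1 z
  simp only
  linarith

end mixf
section main
variable {lam p : ℝ}

lemma ball_pointwise {ε : ℝ} {Fc Gc Fc' Gc' : CDF}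
    (h : dist ((Fc', Gc') : CDF × CDF) (Fc, Gc) < ε) :
    (∀ x, |Fc'.1 x - Fc.1 x| < ε) ∧ (∀ x, |Gc'.1 x - Gc.1 x| < ε) := by
  rw [Prod.dist_eq] at h
  constructor <;> intro x
  · have h1 : dist (Fc'.1 x) (Fc.1 x) ≤ dist Fc'.1 Fc.1 :=
      BoundedContinuousFunction.dist_coe_le_dist x
    have h2 : dist Fc'.1 Fc.1 < ε := lt_of_le_of_lt (le_max_left _ _) h
    rw [← Real.dist_eq]; exact h1.trans_lt h2
  · have h1 : dist (Gc'.1 x) (Gc.1 x) ≤ dist Gc'.1 Gc.1 :=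
      BoundedContinuousFunction.dist_coe_le_dist x
    have h2 : dist Gc'.1 Gc.1 < ε := lt_of_le_of_lt (le_max_right _ _) h
    rw [← Real.dist_eq]; exact h1.trans_lt h2

lemma h1_open (hlam : lam ∈ Set.Ioo (0:ℝ) 1) (hp : p ∈ Set.Ioo (0:ℝ) (1/2)) :
    IsOpen (H1 lam p) := by
  rw [Metric.isOpen_iff]
  rintro ⟨Fc, Gc⟩ hmem
  simp only [H1, Set.mem_setOf_eq] at hmem
  obtain ⟨hlam0, hlam1⟩ := hlam
  have hlm1 : (0:ℝ) < 1 - lam := by linarith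
  set δ : ℝ := -supDiff lam p (Fc, Gc) with hδdef
  have hδ : 0 < δ := by simp only [hδdef]; linarith
  have hsupeq : supDiff lam p (Fc, Gc) = -δ := by rw [hδdef]; ring
  set ε : ℝ := δ * lam * (1 - lam) / 6 with hεdef
  have hε : 0 < ε := by positivity
  have hll : lam * (1 - lam) ≤ 1 := by nlinarith
  have hε6 : ε ≤ δ / 6 := by
    rw [hεdef]; nlinarith [mul_le_mul_of_nonneg_left hll hδ.le]
  have hδl6 : δ * lam / 6 ≤ δ / 6 := by nlinarith [mul_le_mul_of_nonneg_left hlam1.le hδ.le]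
  have hδl6' : δ * (1 - lam) / 6 ≤ δ / 6 := by nlinarith [hδ.le]
  refine ⟨ε, hε, ?_⟩
  rintro ⟨Fc', Gc'⟩ hball
  rw [Metric.mem_ball] at hball
  obtain ⟨hdF, hdG⟩ := ball_pointwise hball
  have hdH : ∀ x, |mixf lam Fc' Gc' x - mixf lam Fc Gc x| < ε := by
    intro x
    have h1 := abs_lt.1 (hdF x); have h2 := abs_lt.1 (hdG x)
    rw [abs_lt]
    constructor <;> · simp only [mixf]; nlinarith
  have hpb := hp_facts hp
  have hHa : mixf lam Fc Gc (qinv (mixf lam Fc Gc) p) = p :=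
    mixf_qinv_apply ⟨hlam0, hlam1⟩ Fc Gc hpb.1
  have hHb : mixf lam Fc Gc (qinv (mixf lam Fc Gc) (1 - p)) = 1 - p :=
    mixf_qinv_apply ⟨hlam0, hlam1⟩ Fc Gc hpb.2.1
  have hH'a : mixf lam Fc' Gc' (qinv (mixf lam Fc' Gc') p) = p :=
    mixf_qinv_apply ⟨hlam0, hlam1⟩ Fc' Gc' hpb.1
  have hH'b : mixf lam Fc' Gc' (qinv (mixf lam Fc' Gc') (1 - p)) = 1 - p :=
    mixf_qinv_apply ⟨hlam0, hlam1⟩ Fc' Gc' hpb.2.1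
  have hab : qinv (mixf lam Fc Gc) p ≤ qinv (mixf lam Fc Gc) (1 - p) :=
    qinv_p_le ⟨hlam0, hlam1⟩ hp Fc Gc
  have hmonoH : Monotone (mixf lam Fc Gc) := mixf_monotone ⟨hlam0, hlam1⟩ Fc Gc
  have hmonoH' : Monotone (mixf lam Fc' Gc') := mixf_monotone ⟨hlam0, hlam1⟩ Fc' Gc'
  show (Fc', Gc') ∈ H1 lam p
  simp only [H1, Set.mem_setOf_eq]
  have key : ∀ x ∈ Dp lam p ⇑Fc'.1 ⇑Gc'.1, Fc'.1 x - Gc'.1 x ≤ -δ/2 := by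
    intro x hx
    rw [Dp_eq] at hx
    have hx1 : p ≤ mixf lam Fc' Gc' x := by rw [← hH'a]; exact hmonoH' hx.1
    have hx2 : mixf lam Fc' Gc' x ≤ 1 - p := by rw [← hH'b]; exact hmonoH' hx.2
    have hdHx := abs_lt.1 (hdH x)
    have hdFx := abs_lt.1 (hdF x); have hdGx := abs_lt.1 (hdG x)
    rcases lt_or_ge x (qinv (mixf lam Fc Gc) p) with hxa | hxa
    · -- x < a
      have hHxa : mixf lam Fc Gc x ≤ p := by rw [← hHa]; exact hmonoH hxa.le
      have hFxa : Fc.1 x ≤ Fc.1 (qinv (mixf lam Fc Gc) p) := Fc.2.1 hxa.le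
      have hGax : (1 - lam) * (Gc.1 (qinv (mixf lam Fc Gc) p) - Gc.1 x) ≤
          mixf lam Fc Gc (qinv (mixf lam Fc Gc) p) - mixf lam Fc Gc x := by
        simp only [mixf]; nlinarith
      have hsup : Fc.1 (qinv (mixf lam Fc Gc) p) - Gc.1 (qinv (mixf lam Fc Gc) p) ≤ -δ := by
        have hmem2 : qinv (mixf lam Fc Gc) p ∈ Dp lam p ⇑Fc.1 ⇑Gc.1 := by
          rw [Dp_eq]; exact ⟨le_refl _, hab⟩
        have := le_supDiff (lam := lam) (p := p) hmem2
        linarith [hsupeq ▸ this]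
      have h3 : mixf lam Fc Gc (qinv (mixf lam Fc Gc) p) - mixf lam Fc Gc x < ε := by
        rw [hHa]; linarith [hdHx.1]
      have h4 : Gc.1 (qinv (mixf lam Fc Gc) p) - Gc.1 x < δ * lam / 6 := by
        have h5 : (1 - lam) * (Gc.1 (qinv (mixf lam Fc Gc) p) - Gc.1 x) <
            (1 - lam) * (δ * lam / 6) := by
          calc (1 - lam) * (Gc.1 (qinv (mixf lam Fc Gc) p) - Gc.1 x) < ε := lt_of_le_of_lt hGax h3
          _ = (1 - lam) * (δ * lam / 6) := by rw [hεdef]; ring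
        exact (mul_lt_mul_iff_right₀ hlm1).1 h5
      linarith
    rcases le_or_gt x (qinv (mixf lam Fc Gc) (1 - p)) with hxb | hxb
    · -- x ∈ [a, b]
      have hsup : Fc.1 x - Gc.1 x ≤ -δ := by
        have hmem2 : x ∈ Dp lam p ⇑Fc.1 ⇑Gc.1 := by rw [Dp_eq]; exact ⟨hxa, hxb⟩
        have := le_supDiff (lam := lam) (p := p) hmem2
        linarith [hsupeq ▸ this]
      linarith
    · -- b < x
      have hHxb : 1 - p ≤ mixf lam Fc Gc x := by rw [← hHb]; exact hmonoH hxb.le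
      have hGbx : Gc.1 (qinv (mixf lam Fc Gc) (1 - p)) ≤ Gc.1 x := Gc.2.1 hxb.le
      have hFbx : lam * (Fc.1 x - Fc.1 (qinv (mixf lam Fc Gc) (1 - p))) ≤
          mixf lam Fc Gc x - mixf lam Fc Gc (qinv (mixf lam Fc Gc) (1 - p)) := by
        simp only [mixf]; nlinarith
      have hsup : Fc.1 (qinv (mixf lam Fc Gc) (1 - p)) - Gc.1 (qinv (mixf lam Fc Gc) (1 - p)) ≤ -δ := by
        have hmem2 : qinv (mixf lam Fc Gc) (1 - p) ∈ Dp lam p ⇑Fc.1 ⇑Gc.1 := by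
          rw [Dp_eq]; exact ⟨hab, le_refl _⟩
        have := le_supDiff (lam := lam) (p := p) hmem2
        linarith [hsupeq ▸ this]
      have h3 : mixf lam Fc Gc x - mixf lam Fc Gc (qinv (mixf lam Fc Gc) (1 - p)) < ε := by
        rw [hHb]; linarith [hdHx.2]
      have h4 : Fc.1 x - Fc.1 (qinv (mixf lam Fc Gc) (1 - p)) < δ * (1 - lam) / 6 := by
        have h5 : lam * (Fc.1 x - Fc.1 (qinv (mixf lam Fc Gc) (1 - p))) <
            lam * (δ * (1 - lam) / 6) := by
          calc lam * (Fc.1 x - Fc.1 (qinv (mixf lam Fc Gc) (1 - p))) < ε := lt_of_le_of_lt hFbx h3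
          _ = lam * (δ * (1 - lam) / 6) := by rw [hεdef]; ring
        exact (mul_lt_mul_iff_right₀ hlam0).1 h5
      linarith
  calc supDiff lam p (Fc', Gc') ≤ -δ/2 := supDiff_le ⟨hlam0, hlam1⟩ hp key
  _ < 0 := by linarith

end main
section sopen
variable {lam p : ℝ}

lemma s_open (hlam : lam ∈ Set.Ioo (0:ℝ) 1) (hp : p ∈ Set.Ioo (0:ℝ) (1/2)) :
    IsOpen {FG : CDF × CDF | ∃ z ∈ Dp lam p ⇑FG.1.1 ⇑FG.2.1, FG.2.1 z < FG.1.1 z} := by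
  rw [Metric.isOpen_iff]
  rintro ⟨Fc, Gc⟩ hmem
  simp only [Set.mem_setOf_eq] at hmem
  obtain ⟨z, hz, hzlt⟩ := hmem
  rw [Dp_eq] at hz
  obtain ⟨hlam0, hlam1⟩ := hlam
  have hlm1 : (0:ℝ) < 1 - lam := by linarith
  set δ : ℝ := Fc.1 z - Gc.1 z with hδdef
  have hδ : 0 < δ := by simp only [hδdef]; linarith
  set ε : ℝ := δ * lam * (1 - lam) / 6 with hεdef
  have hε : 0 < ε := by positivity
  have hll : lam * (1 - lam) ≤ 1 := by nlinarith
  have hε6 : ε ≤ δ / 6 := by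
    rw [hεdef]; nlinarith [mul_le_mul_of_nonneg_left hll hδ.le]
  have hδl6 : δ * lam / 6 ≤ δ / 6 := by nlinarith [mul_le_mul_of_nonneg_left hlam1.le hδ.le]
  have hδl6' : δ * (1 - lam) / 6 ≤ δ / 6 := by nlinarith [hδ.le]
  refine ⟨ε, hε, ?_⟩
  rintro ⟨Fc', Gc'⟩ hball
  rw [Metric.mem_ball] at hball
  obtain ⟨hdF, hdG⟩ := ball_pointwise hball
  have hdH : ∀ x, |mixf lam Fc' Gc' x - mixf lam Fc Gc x| < ε := by
    intro x
    have h1 := abs_lt.1 (hdF x); have h2 := abs_lt.1 (hdG x)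
    rw [abs_lt]
    constructor <;> · simp only [mixf]; nlinarith
  have hpb := hp_facts hp
  have hHa : mixf lam Fc Gc (qinv (mixf lam Fc Gc) p) = p :=
    mixf_qinv_apply ⟨hlam0, hlam1⟩ Fc Gc hpb.1
  have hHb : mixf lam Fc Gc (qinv (mixf lam Fc Gc) (1 - p)) = 1 - p :=
    mixf_qinv_apply ⟨hlam0, hlam1⟩ Fc Gc hpb.2.1
  have hH'a : mixf lam Fc' Gc' (qinv (mixf lam Fc' Gc') p) = p :=
    mixf_qinv_apply ⟨hlam0, hlam1⟩ Fc' Gc' hpb.1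
  have hH'b : mixf lam Fc' Gc' (qinv (mixf lam Fc' Gc') (1 - p)) = 1 - p :=
    mixf_qinv_apply ⟨hlam0, hlam1⟩ Fc' Gc' hpb.2.1
  have ha'b' : qinv (mixf lam Fc' Gc') p ≤ qinv (mixf lam Fc' Gc') (1 - p) :=
    qinv_p_le ⟨hlam0, hlam1⟩ hp Fc' Gc'
  have hmonoH : Monotone (mixf lam Fc Gc) := mixf_monotone ⟨hlam0, hlam1⟩ Fc Gc
  have hmonoH' : Monotone (mixf lam Fc' Gc') := mixf_monotone ⟨hlam0, hlam1⟩ Fc' Gc'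
  show (Fc', Gc') ∈ _
  simp only [Set.mem_setOf_eq]
  set z' : ℝ := max (qinv (mixf lam Fc' Gc') p) (min z (qinv (mixf lam Fc' Gc') (1 - p)))
    with hz'def
  have hz'mem : z' ∈ Dp lam p ⇑Fc'.1 ⇑Gc'.1 := by
    rw [Dp_eq]
    exact ⟨le_max_left _ _, max_le ha'b' (min_le_right _ _)⟩
  refine ⟨z', hz'mem, ?_⟩
  -- main claim : Fc.1 z' - Gc.1 z' > δ - δ/6  (i.e. the unperturbed diff is still large at z')
  have hclaim : δ - δ/6 - ε ≤ Fc.1 z' - Gc.1 z' := by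
    rcases lt_or_ge z (qinv (mixf lam Fc' Gc') p) with h1 | h1
    · -- z < a' : z' = a'
      have hz'eq : z' = qinv (mixf lam Fc' Gc') p := by
        rw [hz'def, min_eq_left (h1.le.trans ha'b'), max_eq_left h1.le]
      rw [hz'eq]
      have hza' : z ≤ qinv (mixf lam Fc' Gc') p := h1.le
      have hH'z : mixf lam Fc' Gc' z ≤ p := by rw [← hH'a]; exact hmonoH' hza'
      have hHz : p ≤ mixf lam Fc Gc z := by rw [← hHa]; exact hmonoH hz.1
      have hHza' : mixf lam Fc Gc z ≤ mixf lam Fc Gc (qinv (mixf lam Fc' Gc') p) :=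
        hmonoH hza'
      have hdHa' := abs_lt.1 (hdH (qinv (mixf lam Fc' Gc') p))
      have h3 : mixf lam Fc Gc (qinv (mixf lam Fc' Gc') p) - mixf lam Fc Gc z < ε := by
        rw [hH'a] at hdHa'; linarith
      have hFza' : Fc.1 z ≤ Fc.1 (qinv (mixf lam Fc' Gc') p) := Fc.2.1 hza'
      have hGax : (1 - lam) * (Gc.1 (qinv (mixf lam Fc' Gc') p) - Gc.1 z) ≤
          mixf lam Fc Gc (qinv (mixf lam Fc' Gc') p) - mixf lam Fc Gc z := by
        simp only [mixf]; nlinarith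
      have h4 : Gc.1 (qinv (mixf lam Fc' Gc') p) - Gc.1 z < δ * lam / 6 := by
        have h5 : (1 - lam) * (Gc.1 (qinv (mixf lam Fc' Gc') p) - Gc.1 z) <
            (1 - lam) * (δ * lam / 6) := by
          calc (1 - lam) * (Gc.1 (qinv (mixf lam Fc' Gc') p) - Gc.1 z) <
              ε := lt_of_le_of_lt hGax h3
          _ = (1 - lam) * (δ * lam / 6) := by rw [hεdef]; ring
        exact (mul_lt_mul_iff_right₀ hlm1).1 h5
      linarith
    rcases le_or_gt z (qinv (mixf lam Fc' Gc') (1 - p)) with h2 | h2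
    · -- a' ≤ z ≤ b' : z' = z
      have hz'eq : z' = z := by rw [hz'def, min_eq_left h2, max_eq_right h1]
      rw [hz'eq]; linarith
    · -- b' < z : z' = b'
      have hz'eq : z' = qinv (mixf lam Fc' Gc') (1 - p) := by
        rw [hz'def, min_eq_right h2.le, max_eq_right ha'b']
      rw [hz'eq]
      have hb'z : qinv (mixf lam Fc' Gc') (1 - p) ≤ z := h2.le
      have hH'z : 1 - p ≤ mixf lam Fc' Gc' z := by rw [← hH'b]; exact hmonoH' hb'z
      have hHz : mixf lam Fc Gc z ≤ 1 - p := by rw [← hHb]; exact hmonoH hz.2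
      have hdHb' := abs_lt.1 (hdH (qinv (mixf lam Fc' Gc') (1 - p)))
      have h3 : mixf lam Fc Gc z - mixf lam Fc Gc (qinv (mixf lam Fc' Gc') (1 - p)) < ε := by
        rw [hH'b] at hdHb'; linarith
      have hGzb' : Gc.1 (qinv (mixf lam Fc' Gc') (1 - p)) ≤ Gc.1 z := Gc.2.1 hb'z
      have hFbx : lam * (Fc.1 z - Fc.1 (qinv (mixf lam Fc' Gc') (1 - p))) ≤
          mixf lam Fc Gc z - mixf lam Fc Gc (qinv (mixf lam Fc' Gc') (1 - p)) := by
        simp only [mixf]; nlinarith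
      have h4 : Fc.1 z - Fc.1 (qinv (mixf lam Fc' Gc') (1 - p)) < δ * (1 - lam) / 6 := by
        have h5 : lam * (Fc.1 z - Fc.1 (qinv (mixf lam Fc' Gc') (1 - p))) <
            lam * (δ * (1 - lam) / 6) := by
          calc lam * (Fc.1 z - Fc.1 (qinv (mixf lam Fc' Gc') (1 - p))) <
              ε := lt_of_le_of_lt hFbx h3
          _ = lam * (δ * (1 - lam) / 6) := by rw [hεdef]; ring
        exact (mul_lt_mul_iff_right₀ hlam0).1 h5
      linarith
  have hdFz := abs_lt.1 (hdF z'); have hdGz := abs_lt.1 (hdG z')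
  linarith

end sopen
section ramp

noncomputable def ramp (c : ℝ) : ℝ → ℝ := fun x => min (max (x - c) 0) 1

lemma ramp_cont (c : ℝ) : Continuous (ramp c) := by unfold ramp; fun_prop

lemma ramp_mono (c : ℝ) : Monotone (ramp c) := fun a b h => by
  unfold ramp
  exact min_le_min (max_le_max (by linarith) le_rfl) le_rfl

lemma ramp_nonneg (c x : ℝ) : 0 ≤ ramp c x := le_min (le_max_right _ _) zero_le_one

lemma ramp_le_one (c x : ℝ) : ramp c x ≤ 1 := min_le_right _ _

lemma ramp_eq_zero {c x : ℝ} (h : x ≤ c) : ramp c x = 0 := by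
  unfold ramp
  rw [max_eq_right (by linarith), min_eq_left zero_le_one]

lemma ramp_eq_one {c x : ℝ} (h : c + 1 ≤ x) : ramp c x = 1 := by
  unfold ramp
  rw [max_eq_left (by linarith), min_eq_right (by linarith)]

lemma ramp_tendsto0 (c : ℝ) : Tendsto (ramp c) atBot (𝓝 0) :=
  tendsto_const_nhds.congr' (((eventually_le_atBot c).mono fun _ hx => (ramp_eq_zero hx).symm))

lemma ramp_tendsto1 (c : ℝ) : Tendsto (ramp c) atTop (𝓝 1) :=
  tendsto_const_nhds.congr' (((eventually_ge_atTop (c+1)).mono fun _ hx => (ramp_eq_one hx).symm))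

noncomputable def rampBCF (c : ℝ) : BoundedContinuousFunction ℝ ℝ :=
  BoundedContinuousFunction.ofNormedAddCommGroup (ramp c) (ramp_cont c) 1
    (fun x => by
      rw [Real.norm_eq_abs, abs_le]
      exact ⟨by linarith [ramp_nonneg c x], ramp_le_one c x⟩)

lemma rampBCF_coe (c : ℝ) : ⇑(rampBCF c) = ramp c := rfl

lemma pert_mem (Fc : CDF) (c : ℝ) {s : ℝ} (hs0 : 0 ≤ s) (hs1 : s ≤ 1) :
    Monotone ⇑((1-s) • Fc.1 + s • rampBCF c) ∧
    Tendsto ⇑((1-s) • Fc.1 + s • rampBCF c) atBot (𝓝 0) ∧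
    Tendsto ⇑((1-s) • Fc.1 + s • rampBCF c) atTop (𝓝 1) := by
  have hcoe : ∀ x, ((1-s) • Fc.1 + s • rampBCF c) x = (1-s) * Fc.1 x + s * ramp c x :=
    fun x => rfl
  refine ⟨fun a b hab => ?_, ?_, ?_⟩
  · rw [hcoe, hcoe]
    exact add_le_add (mul_le_mul_of_nonneg_left (Fc.2.1 hab) (by linarith))
      (mul_le_mul_of_nonneg_left (ramp_mono c hab) hs0)
  · have h := (Fc.2.2.1.const_mul (1-s)).add ((ramp_tendsto0 c).const_mul s)
    simp only [mul_zero, add_zero] at h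
    exact Tendsto.congr (fun x => (hcoe x).symm) h
  · have h := (Fc.2.2.2.const_mul (1-s)).add ((ramp_tendsto1 c).const_mul s)
    rw [show (1-s)*1 + s*1 = (1:ℝ) by ring] at h
    exact Tendsto.congr (fun x => (hcoe x).symm) h

end ramp
section closurelemma
variable {lam p : ℝ}

set_option maxHeartbeats 1000000 in

lemma near_H1 (hlam : lam ∈ Set.Ioo (0:ℝ) 1) (hp : p ∈ Set.Ioo (0:ℝ) (1/2))
    (Fc Gc : CDF) (h : ∀ z ∈ Dp lam p ⇑Fc.1 ⇑Gc.1, Fc.1 z ≤ Gc.1 z)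
    {ε : ℝ} (hε : 0 < ε) :
    ∃ FG' : CDF × CDF, FG' ∈ H1 lam p ∧ dist FG' ((Fc, Gc) : CDF × CDF) < ε := by
  obtain ⟨hlam0, hlam1⟩ := hlam
  have hlm1 : (0:ℝ) < 1 - lam := by linarith
  obtain ⟨hp0, hp2⟩ := hp
  have hpb := hp_facts ⟨hp0, hp2⟩
  -- choose M and m
  obtain ⟨M, hM⟩ := ((mixf_tendsto1 (lam := lam) Fc Gc).eventually
    (eventually_gt_nhds (show 1 - p/2 < 1 by linarith))).exists
  obtain ⟨m0, hm0⟩ := eventually_atBot.1 ((mixf_tendsto0 (lam := lam) Fc Gc).eventually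
    (eventually_lt_nhds (show (0:ℝ) < p/2 by linarith)))
  set m : ℝ := min m0 M with hmdef
  have hmM : m ≤ M := min_le_right _ _
  have hHm : ∀ x ≤ m, mixf lam Fc Gc x < p/2 :=
    fun x hx => hm0 x (le_trans hx (min_le_left _ _))
  -- choose s
  set s : ℝ := min (ε/2) (p/4) with hsdef
  have hs0 : 0 < s := lt_min (by linarith) (by linarith)
  have hsε : s ≤ ε/2 := min_le_left _ _
  have hsp : s ≤ p/4 := min_le_right _ _
  have hs1 : s < 1 := by linarith
  -- perturbed pair
  set Fc'' : CDF := ⟨(1-s) • Fc.1 + s • rampBCF M, pert_mem Fc M hs0.le hs1.le⟩ with hF''def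
  set Gc'' : CDF := ⟨(1-s) • Gc.1 + s • rampBCF (m-1), pert_mem Gc (m-1) hs0.le hs1.le⟩
    with hG''def
  have hcoeF : ∀ x, Fc''.1 x = (1-s) * Fc.1 x + s * ramp M x := fun x => rfl
  have hcoeG : ∀ x, Gc''.1 x = (1-s) * Gc.1 x + s * ramp (m-1) x := fun x => rfl
  clear_value Fc'' Gc''
  refine ⟨(Fc'', Gc''), ?_, ?_⟩
  · -- membership in H1
    simp only [H1, Set.mem_setOf_eq]
    have hmono'' : Monotone (mixf lam Fc'' Gc'') := mixf_monotone ⟨hlam0, hlam1⟩ Fc'' Gc''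
    have hmono : Monotone (mixf lam Fc Gc) := mixf_monotone ⟨hlam0, hlam1⟩ Fc Gc
    have hHa : mixf lam Fc Gc (qinv (mixf lam Fc Gc) p) = p :=
      mixf_qinv_apply ⟨hlam0, hlam1⟩ Fc Gc hpb.1
    have hHb : mixf lam Fc Gc (qinv (mixf lam Fc Gc) (1 - p)) = 1 - p :=
      mixf_qinv_apply ⟨hlam0, hlam1⟩ Fc Gc hpb.2.1
    have hH''a : mixf lam Fc'' Gc'' (qinv (mixf lam Fc'' Gc'') p) = p :=
      mixf_qinv_apply ⟨hlam0, hlam1⟩ Fc'' Gc'' hpb.1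
    have hH''b : mixf lam Fc'' Gc'' (qinv (mixf lam Fc'' Gc'') (1 - p)) = 1 - p :=
      mixf_qinv_apply ⟨hlam0, hlam1⟩ Fc'' Gc'' hpb.2.1
    have hab : qinv (mixf lam Fc Gc) p ≤ qinv (mixf lam Fc Gc) (1 - p) :=
      qinv_p_le ⟨hlam0, hlam1⟩ ⟨hp0, hp2⟩ Fc Gc
    have hH''eq : ∀ x, mixf lam Fc'' Gc'' x =
        (1-s) * mixf lam Fc Gc x + s * (lam * ramp M x + (1-lam) * ramp (m-1) x) := by
      intro x
      simp only [mixf, hcoeF, hcoeG]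
      ring
    -- b'' ≤ M
    have hb''M : qinv (mixf lam Fc'' Gc'') (1 - p) ≤ M := by
      refine qinv_le (mixf_monotone ⟨hlam0, hlam1⟩ Fc'' Gc'')
        (mixf_tendsto0 Fc'' Gc'') hpb.2.1.1 ?_
      rw [hH''eq M, ramp_eq_zero (le_refl M), ramp_eq_one (by linarith : (m-1) + 1 ≤ M)]
      have hHM1 : mixf lam Fc Gc M ≤ 1 := cdf_le_one hmono (mixf_tendsto1 Fc Gc) M
      nlinarith [mul_le_mul_of_nonneg_left hM.le (by linarith : (0:ℝ) ≤ 1-s),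
        mul_le_mul_of_nonneg_left hlam1.le hs0.le, mul_nonneg hs0.le hp0.le]
    -- m ≤ a''
    have hma'' : m ≤ qinv (mixf lam Fc'' Gc'') p := by
      by_contra hcon
      push_neg at hcon
      have h1 : mixf lam Fc Gc (qinv (mixf lam Fc'' Gc'') p) < p/2 := hHm _ hcon.le
      have h2 := hH''eq (qinv (mixf lam Fc'' Gc'') p)
      have h3 : ramp M (qinv (mixf lam Fc'' Gc'') p) ≤ 1 := ramp_le_one _ _
      have h4 : ramp (m-1) (qinv (mixf lam Fc'' Gc'') p) ≤ 1 := ramp_le_one _ _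
      have h5 : 0 ≤ mixf lam Fc Gc (qinv (mixf lam Fc'' Gc'') p) :=
        cdf_nonneg hmono (mixf_tendsto0 Fc Gc) _
      have h6 := ramp_nonneg M (qinv (mixf lam Fc'' Gc'') p)
      have h7 := ramp_nonneg (m-1) (qinv (mixf lam Fc'' Gc'') p)
      have haux : lam * ramp M (qinv (mixf lam Fc'' Gc'') p) +
          (1-lam) * ramp (m-1) (qinv (mixf lam Fc'' Gc'') p) ≤ 1 := by nlinarith
      rw [hH''a] at h2
      nlinarith [mul_le_mul_of_nonneg_left haux hs0.le,
        mul_lt_mul_of_pos_left h1 (show (0:ℝ) < 1-s by linarith),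
        mul_nonneg hs0.le hp0.le]
    have key : ∀ x ∈ Dp lam p ⇑Fc''.1 ⇑Gc''.1, Fc''.1 x - Gc''.1 x ≤ -(s*p) := by
      intro x hx
      rw [Dp_eq] at hx
      have hxm : m ≤ x := le_trans hma'' hx.1
      have hxM : x ≤ M := le_trans hx.2 hb''M
      have hJ0 : ramp M x = 0 := ramp_eq_zero hxM
      have hJ1 : ramp (m-1) x = 1 := ramp_eq_one (by linarith)
      have hx1 : p ≤ mixf lam Fc'' Gc'' x := by rw [← hH''a]; exact hmono'' hx.1
      have hx2 : mixf lam Fc'' Gc'' x ≤ 1 - p := by rw [← hH''b]; exact hmono'' hx.2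
      have hH''x : mixf lam Fc'' Gc'' x = (1-s) * mixf lam Fc Gc x + s * (1-lam) := by
        rw [hH''eq x, hJ0, hJ1]; ring
      have hdiff : Fc''.1 x - Gc''.1 x = (1-s) * (Fc.1 x - Gc.1 x) - s := by
        rw [hcoeF, hcoeG, hJ0, hJ1]; ring
      rcases lt_or_ge x (qinv (mixf lam Fc Gc) p) with hxa | hxa
      · -- x < a
        have hHx : mixf lam Fc Gc x ≤ p := by rw [← hHa]; exact hmono hxa.le
        have hFxa : Fc.1 x ≤ Fc.1 (qinv (mixf lam Fc Gc) p) := Fc.2.1 hxa.le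
        have hGax : (1 - lam) * (Gc.1 (qinv (mixf lam Fc Gc) p) - Gc.1 x) ≤
            mixf lam Fc Gc (qinv (mixf lam Fc Gc) p) - mixf lam Fc Gc x := by
          simp only [mixf]; nlinarith
        have hFaGa : Fc.1 (qinv (mixf lam Fc Gc) p) ≤ Gc.1 (qinv (mixf lam Fc Gc) p) := by
          refine h _ ?_
          rw [Dp_eq]; exact ⟨le_refl _, hab⟩
        -- (1-s)(Ha - Hx) ≤ s(1-lam-p)
        have hstep : (1-s) * (mixf lam Fc Gc (qinv (mixf lam Fc Gc) p) - mixf lam Fc Gc x)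
            ≤ s * (1 - lam - p) := by
          rw [hHa]; nlinarith [hx1, hH''x]
        have hq1 : (1-s) * ((1 - lam) * (Gc.1 (qinv (mixf lam Fc Gc) p) - Gc.1 x)) ≤
            (1-s) * (mixf lam Fc Gc (qinv (mixf lam Fc Gc) p) - mixf lam Fc Gc x) :=
          mul_le_mul_of_nonneg_left hGax (by linarith)
        have hq2 : (1-lam) * (1-s) * (Fc.1 x - Gc.1 x) ≤
            (1-lam) * (1-s) * (Gc.1 (qinv (mixf lam Fc Gc) p) - Gc.1 x) :=
          mul_le_mul_of_nonneg_left (by linarith)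
            (by nlinarith : (0:ℝ) ≤ (1-lam) * (1-s))
        have hkey : (1 - lam) * ((Fc''.1 x - Gc''.1 x) + s*p) ≤ 0 := by
          rw [hdiff]
          nlinarith [hq1, hq2, hstep, mul_nonneg (mul_nonneg hs0.le hp0.le) hlam0.le]
        have := (mul_le_mul_iff_right₀ hlm1).1 (by linarith : (1-lam) * ((Fc''.1 x - Gc''.1 x) + s*p) ≤ (1-lam) * 0)
        linarith
      rcases le_or_gt x (qinv (mixf lam Fc Gc) (1 - p)) with hxb | hxb
      · -- a ≤ x ≤ b
        have hFG : Fc.1 x ≤ Gc.1 x := by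
          refine h _ ?_
          rw [Dp_eq]; exact ⟨hxa, hxb⟩
        rw [hdiff]
        nlinarith [mul_nonneg (by linarith : (0:ℝ) ≤ 1-s) (by linarith : 0 ≤ Gc.1 x - Fc.1 x),
          mul_le_mul_of_nonneg_left (by linarith : p ≤ 1) hs0.le]
      · -- b < x
        have hHx : 1 - p ≤ mixf lam Fc Gc x := by rw [← hHb]; exact hmono hxb.le
        have hGbx : Gc.1 (qinv (mixf lam Fc Gc) (1 - p)) ≤ Gc.1 x := Gc.2.1 hxb.le
        have hFbx : lam * (Fc.1 x - Fc.1 (qinv (mixf lam Fc Gc) (1 - p))) ≤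
            mixf lam Fc Gc x - mixf lam Fc Gc (qinv (mixf lam Fc Gc) (1 - p)) := by
          simp only [mixf]; nlinarith
        have hFbGb : Fc.1 (qinv (mixf lam Fc Gc) (1 - p)) ≤
            Gc.1 (qinv (mixf lam Fc Gc) (1 - p)) := by
          refine h _ ?_
          rw [Dp_eq]; exact ⟨hab, le_refl _⟩
        have hstep : (1-s) * (mixf lam Fc Gc x - mixf lam Fc Gc (qinv (mixf lam Fc Gc) (1-p)))
            ≤ s * (lam - p) := by
          rw [hHb]; nlinarith [hx2, hH''x]
        have hq1 : (1-s) * (lam * (Fc.1 x - Fc.1 (qinv (mixf lam Fc Gc) (1-p)))) ≤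
            (1-s) * (mixf lam Fc Gc x - mixf lam Fc Gc (qinv (mixf lam Fc Gc) (1-p))) :=
          mul_le_mul_of_nonneg_left hFbx (by linarith)
        have hq2 : lam * (1-s) * (Fc.1 x - Gc.1 x) ≤
            lam * (1-s) * (Fc.1 x - Fc.1 (qinv (mixf lam Fc Gc) (1-p))) :=
          mul_le_mul_of_nonneg_left (by linarith)
            (by nlinarith : (0:ℝ) ≤ lam * (1-s))
        have hkey : lam * ((Fc''.1 x - Gc''.1 x) + s*p) ≤ 0 := by
          rw [hdiff]
          nlinarith [hq1, hq2, hstep, mul_nonneg (mul_nonneg hs0.le hp0.le) hlm1.le]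
        have := (mul_le_mul_iff_right₀ hlam0).1 (by linarith : lam * ((Fc''.1 x - Gc''.1 x) + s*p) ≤ lam * 0)
        linarith
    have : supDiff lam p (Fc'', Gc'') ≤ -(s*p) := supDiff_le ⟨hlam0, hlam1⟩ ⟨hp0, hp2⟩ key
    nlinarith [mul_pos hs0 hp0]
  · -- distance
    rw [Prod.dist_eq]
    have hdF : dist Fc''.1 Fc.1 ≤ s := by
      rw [BoundedContinuousFunction.dist_le hs0.le]
      intro x
      rw [Real.dist_eq, hcoeF,
        show (1-s) * Fc.1 x + s * ramp M x - Fc.1 x = s * (ramp M x - Fc.1 x) by ring,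
        abs_mul, abs_of_nonneg hs0.le]
      have h1 := ramp_nonneg M x; have h2 := ramp_le_one M x
      have h3 := cdf_nonneg Fc.2.1 Fc.2.2.1 x; have h4 := cdf_le_one Fc.2.1 Fc.2.2.2 x
      have h5 : |ramp M x - Fc.1 x| ≤ 1 := abs_le.2 ⟨by linarith, by linarith⟩
      exact le_trans (mul_le_mul_of_nonneg_left h5 hs0.le) (by linarith)
    have hdG : dist Gc''.1 Gc.1 ≤ s := by
      rw [BoundedContinuousFunction.dist_le hs0.le]
      intro x
      rw [Real.dist_eq, hcoeG,
        show (1-s) * Gc.1 x + s * ramp (m-1) x - Gc.1 x = s * (ramp (m-1) x - Gc.1 x) by ring,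
        abs_mul, abs_of_nonneg hs0.le]
      have h1 := ramp_nonneg (m-1) x; have h2 := ramp_le_one (m-1) x
      have h3 := cdf_nonneg Gc.2.1 Gc.2.2.1 x; have h4 := cdf_le_one Gc.2.1 Gc.2.2.2 x
      have h5 : |ramp (m-1) x - Gc.1 x| ≤ 1 := abs_le.2 ⟨by linarith, by linarith⟩
      exact le_trans (mul_le_mul_of_nonneg_left h5 hs0.le) (by linarith)
    exact max_lt (lt_of_le_of_lt hdF (by linarith)) (lt_of_le_of_lt hdG (by linarith))

end closurelemma

theorem stmt_0 (lam p : ℝ) (hlam : lam ∈ Set.Ioo (0 : ℝ) 1)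
    (hp : p ∈ Set.Ioo (0 : ℝ) (1 / 2)) :
    IsClosed (H0 lam p) ∧
    frontier (H0 lam p) = {FG : CDF × CDF | supDiff lam p FG = 0} ∧
    frontier (H0 lam p) = frontier (H1 lam p) ∧
    interior (H0 lam p) =
      {FG : CDF × CDF | ∃ z ∈ Dp lam p ⇑FG.1.1 ⇑FG.2.1, FG.2.1 z < FG.1.1 z} := by
  set S : Set (CDF × CDF) :=
    {FG : CDF × CDF | ∃ z ∈ Dp lam p ⇑FG.1.1 ⇑FG.2.1, FG.2.1 z < FG.1.1 z} with hSdef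
  have hcompl : (H1 lam p)ᶜ = H0 lam p := by
    ext FG; simp [H0, H1, not_lt]
  have hclosed : IsClosed (H0 lam p) := by
    rw [← hcompl]; exact (h1_open hlam hp).isClosed_compl
  have hSsubH0 : S ⊆ H0 lam p := by
    rintro FG ⟨z, hz, hlt⟩
    have h1 := le_supDiff (lam := lam) (p := p) (Fc := FG.1) (Gc := FG.2) hz
    simp only [Prod.mk.eta] at h1
    simp only [H0, Set.mem_setOf_eq]
    linarith
  have hint : interior (H0 lam p) = S := by
    apply subset_antisymm
    · intro FG hFG
      by_contra hnS
      have hall : ∀ z ∈ Dp lam p ⇑FG.1.1 ⇑FG.2.1, FG.1.1 z ≤ FG.2.1 z := by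
        intro z hz
        by_contra hlt
        push_neg at hlt
        exact hnS ⟨z, hz, hlt⟩
      obtain ⟨ε, hε, hball⟩ := Metric.mem_nhds_iff.1 (mem_interior_iff_mem_nhds.1 hFG)
      obtain ⟨FG', hFG'H1, hdist⟩ := near_H1 hlam hp FG.1 FG.2 hall hε
      have hmem : FG' ∈ Metric.ball FG ε := by
        rw [Metric.mem_ball]
        simpa only [Prod.mk.eta] using hdist
      have hH0 := hball hmem
      simp only [H0, Set.mem_setOf_eq] at hH0
      simp only [H1, Set.mem_setOf_eq] at hFG'H1
      linarith
    · exact interior_maximal hSsubH0 (s_open hlam hp)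
  refine ⟨hclosed, ?_, ?_, hint⟩
  · rw [hclosed.frontier_eq, hint]
    ext FG
    simp only [Set.mem_diff, H0, Set.mem_setOf_eq, hSdef]
    constructor
    · rintro ⟨h0le, hnS⟩
      refine le_antisymm ?_ h0le
      have hallle : ∀ x ∈ Dp lam p ⇑FG.1.1 ⇑FG.2.1, FG.1.1 x - FG.2.1 x ≤ 0 := by
        intro x hx
        by_contra hlt
        push_neg at hlt
        exact hnS ⟨x, hx, by linarith⟩
      have := supDiff_le (Fc := FG.1) (Gc := FG.2) hlam hp hallle
      simpa only [Prod.mk.eta] using this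
    · rintro heq
      refine ⟨heq.ge, ?_⟩
      rintro ⟨z, hz, hlt⟩
      have h1 := le_supDiff (lam := lam) (p := p) (Fc := FG.1) (Gc := FG.2) hz
      simp only [Prod.mk.eta] at h1
      rw [heq] at h1
      linarith
  · rw [← hcompl, frontier_compl]
end

section
/- The set 𝓐 = {(F,G) ∈ 𝓕×𝓕 : sup_{x∈D_p(F,G)} (F(x) − G(x)) = 0} is contained in the boundary of H₁ in (𝓕×𝓕, d₂); that is, every pair (F,G) with sup_{x∈D_p(F,G)}(F(x)−G(x)) = 0 is a limit (in d₂) of pairs (F̃,G̃) satisfying sup_{x∈D_p(F̃,G̃)}(F̃(x)−G̃(x)) < 0. -/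
set_option maxHeartbeats 1000000


open Filter Topology

lemma mono_bdd {f : ℝ → ℝ} (hm : Monotone f) (h0 : Tendsto f atBot (𝓝 0))
    (h1 : Tendsto f atTop (𝓝 1)) (x : ℝ) : 0 ≤ f x ∧ f x ≤ 1 := by
  constructor
  · exact le_of_tendsto h0 (eventually_atBot.2 ⟨x, fun y hy => hm hy⟩)
  · exact ge_of_tendsto h1 (eventually_atTop.2 ⟨x, fun y hy => hm hy⟩)


lemma qinv_spec {K : ℝ → ℝ} (hc : Continuous K) (hm : Monotone K)
    (h0 : Tendsto K atBot (𝓝 0)) (h1 : Tendsto K atTop (𝓝 1)) {t : ℝ}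
    (ht0 : 0 < t) (ht1 : t < 1) :
    K (qinv K t) = t ∧ ∀ x, (t ≤ K x ↔ qinv K t ≤ x) := by
  set S : Set ℝ := {x | t ≤ K x} with hS
  have hne : S.Nonempty := by
    obtain ⟨x, hx⟩ := (h1.eventually (eventually_ge_nhds ht1)).exists
    exact ⟨x, hx⟩
  have hev : ∀ᶠ x in atBot, K x < t := h0.eventually (eventually_lt_nhds ht0)
  obtain ⟨y, hy⟩ := eventually_atBot.1 hev
  have hbdd : BddBelow S := by
    refine ⟨y, fun s hs => ?_⟩
    by_contra hsy
    exact absurd hs (not_le.2 (hy s (le_of_not_ge hsy)))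
  have hcl : IsClosed S := isClosed_le continuous_const hc
  have hmem : qinv K t ∈ S := hcl.csInf_mem hne hbdd
  have hKq : K (qinv K t) = t := by
    have hmem' : t ≤ K (qinv K t) := hmem
    rcases lt_or_eq_of_le hmem' with h | h
    case inr => exact h.symm
    case inl =>
      exfalso
      set q := qinv K t with hq
      set y' := min y (q - 1) with hy'
      have hy'q : y' ≤ q := le_trans (min_le_right _ _) (by linarith)
      have hKy' : K y' < t := lt_of_le_of_lt (hm (min_le_left _ _)) (hy y le_rfl)
      have htI : t ∈ Set.Icc (K y') (K q) := ⟨le_of_lt hKy', le_of_lt h⟩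
      obtain ⟨z, hz, hzK⟩ := intermediate_value_Icc hy'q hc.continuousOn htI
      have hzS : z ∈ S := by simp [hS, hzK]
      have hqz : q ≤ z := csInf_le hbdd hzS
      have hzq : z = q := le_antisymm hz.2 hqz
      rw [hzq] at hzK
      exact absurd hzK (ne_of_lt h).symm
  refine ⟨hKq, fun x => ⟨fun hx => csInf_le hbdd hx, fun hx => hKq ▸ hm hx⟩⟩



lemma key_arith (lam p δ f g : ℝ) (hl0 : 0 < lam) (hl1 : lam < 1)
    (hp0 : 0 < p) (hp1 : p < 1/2) (hδ0 : 0 < δ) (hδp : δ ≤ p/2)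
    (hf0 : 0 ≤ f) (hf1 : f ≤ 1) (hg0 : 0 ≤ g) (hg1 : g ≤ 1)
    (hlo : p ≤ lam*f + (1-lam)*g + δ*(1-lam)*min g (1-g))
    (hhi : lam*f + (1-lam)*g ≤ 1-p + δ*lam*min f (1-f))
    (c1 : p ≤ lam*f+(1-lam)*g → lam*f+(1-lam)*g ≤ 1-p → f ≤ g)
    (c2 : lam*f+(1-lam)*g < p → f - g ≤ δ * min g (1-g))
    (c3 : 1-p < lam*f+(1-lam)*g → f - g ≤ δ * min f (1-f)) :
    f - g - δ*(min f (1-f) + min g (1-g)) ≤ -(δ*p/4) := by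
  set mf := min f (1-f) with hmf
  set mg := min g (1-g) with hmg
  have hmf1 : mf ≤ f := min_le_left _ _
  have hmf2 : mf ≤ 1 - f := min_le_right _ _
  have hmf0 : 0 ≤ mf := le_min hf0 (by linarith)
  have hmg1 : mg ≤ g := min_le_left _ _
  have hmg2 : mg ≤ 1 - g := min_le_right _ _
  have hmg0 : 0 ≤ mg := le_min hg0 (by linarith)
  have hmfh : mf ≤ 1/2 := by linarith
  have hmgh : mg ≤ 1/2 := by linarith
  have hδ1 : δ ≤ 1/2 := by linarith
  have hl1' : (0:ℝ) ≤ 1 - lam := by linarith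
  -- product bounds
  have pd1 : δ*mf ≤ p/4 := by nlinarith
  have pd2 : δ*mg ≤ p/4 := by nlinarith
  have pd3 : 0 ≤ δ*mf := mul_nonneg hδ0.le hmf0
  have pd4 : 0 ≤ δ*mg := mul_nonneg hδ0.le hmg0
  have pd5 : δ*(1-lam)*mg ≤ δ*mg := by nlinarith [mul_nonneg (mul_nonneg hl0.le hδ0.le) hmg0]
  have pd6 : δ*lam*mf ≤ δ*mf := by nlinarith [mul_nonneg (mul_nonneg hl1' hδ0.le) hmf0]
  have pdE : δ*(mf+mg) = δ*mf + δ*mg := by ring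
  have pd7 : δ*p ≤ p := by nlinarith [mul_nonneg hp0.le (by linarith : (0:ℝ) ≤ 1-δ)]
  set h := lam*f+(1-lam)*g with hh
  have hmax : h ≤ max f g := by
    rcases le_total f g with hfg|hfg
    · have : h ≤ g := by linarith [mul_le_mul_of_nonneg_left hfg hl0.le]
      exact le_trans this (le_max_right _ _)
    · have : h ≤ f := by linarith [mul_le_mul_of_nonneg_left hfg hl1']
      exact le_trans this (le_max_left _ _)
  have hmin : min f g ≤ h := by
    rcases le_total f g with hfg|hfg
    · have : f ≤ h := by linarith [mul_le_mul_of_nonneg_left hfg hl1']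
      exact le_trans (min_le_left _ _) this
    · have : g ≤ h := by linarith [mul_le_mul_of_nonneg_left hfg hl0.le]
      exact le_trans (min_le_right _ _) this
  rcases lt_trichotomy h p with hc|hc|hc
  · -- case ii : h < p
    have h2 := c2 hc
    have hE : f - g - δ*(mf + mg) ≤ -(δ*mf) := by linarith
    rcases le_or_gt (p/4) mf with hm|hm
    · have hd : δ*(p/4) ≤ δ*mf := mul_le_mul_of_nonneg_left hm hδ0.le
      linarith
    · rcases min_cases f (1-f) with ⟨he, hle⟩|⟨he, hle⟩
      · -- mf = f < p/4
        have hfp : f < p/4 := by rw [hmf, he] at hm; exact hm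
        -- from hlo : p ≤ lam*f + (1-lam)*g + δ*(1-lam)*mg
        have t1 : lam*f ≤ f := by linarith [mul_nonneg hl1' hf0, mul_nonneg hl0.le hf0]
        have t2 : (1-lam)*g ≤ g := by linarith [mul_nonneg hl0.le hg0]
        have hgp : p/2 ≤ g := by
          have : p - p/4 - p/4 ≤ (1-lam)*g := by linarith
          linarith
        linarith
      · -- mf = 1 - f, f > 1 - p/4
        have hfp : 1 - p/4 < f := by rw [hmf, he] at hm; linarith
        have hgbig : 5/8 ≤ g := by linarith
        have : (5:ℝ)/8 ≤ min f g := le_min (by linarith) hgbig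
        linarith [hmin]
  · -- h = p, case i
    have h1 := c1 (le_of_eq hc.symm) (by linarith)
    rcases le_or_gt (p/2) (mf + mg) with hm|hm
    · have : δ*(p/2) ≤ δ*(mf+mg) := mul_le_mul_of_nonneg_left hm hδ0.le
      linarith
    · have hmfp : mf < p/2 := by linarith
      have hmgp : mg < p/2 := by linarith
      rcases min_cases f (1-f) with ⟨hef, _⟩|⟨hef, hlef⟩ <;>
      rcases min_cases g (1-g) with ⟨heg, _⟩|⟨heg, hleg⟩
      · exfalso
        have hfp : f < p/2 := by rw [hmf, hef] at hmfp; exact hmfp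
        have hgp : g < p/2 := by rw [hmg, heg] at hmgp; exact hmgp
        have : max f g < p := by apply max_lt <;> linarith
        linarith [hmax]
      · have hfp : f < p/2 := by rw [hmf, hef] at hmfp; exact hmfp
        have hgp : 1 - p/2 < g := by rw [hmg, heg] at hmgp; linarith
        linarith
      · exfalso
        have hfp : 1 - p/2 < f := by rw [hmf, hef] at hmfp; linarith
        have hgp : g < p/2 := by rw [hmg, heg] at hmgp; exact hmgp
        linarith
      · exfalso
        have hfp : 1 - p/2 < f := by rw [hmf, hef] at hmfp; linarith
        have hgp : 1 - p/2 < g := by rw [hmg, heg] at hmgp; linarith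
        have : 1 - p/2 < min f g := lt_min hfp hgp
        linarith [hmin]
  · rcases le_or_gt h (1-p) with hc'|hc'
    · -- case i
      have h1 := c1 (le_of_lt hc) hc'
      rcases le_or_gt (p/2) (mf + mg) with hm|hm
      · have : δ*(p/2) ≤ δ*(mf+mg) := mul_le_mul_of_nonneg_left hm hδ0.le
        linarith
      · have hmfp : mf < p/2 := by linarith
        have hmgp : mg < p/2 := by linarith
        rcases min_cases f (1-f) with ⟨hef, _⟩|⟨hef, hlef⟩ <;>
        rcases min_cases g (1-g) with ⟨heg, _⟩|⟨heg, hleg⟩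
        · exfalso
          have hfp : f < p/2 := by rw [hmf, hef] at hmfp; exact hmfp
          have hgp : g < p/2 := by rw [hmg, heg] at hmgp; exact hmgp
          have : max f g < p := by apply max_lt <;> linarith
          linarith [hmax]
        · have hfp : f < p/2 := by rw [hmf, hef] at hmfp; exact hmfp
          have hgp : 1 - p/2 < g := by rw [hmg, heg] at hmgp; linarith
          linarith
        · exfalso
          have hfp : 1 - p/2 < f := by rw [hmf, hef] at hmfp; linarith
          have hgp : g < p/2 := by rw [hmg, heg] at hmgp; exact hmgp
          linarith
        · exfalso
          have hfp : 1 - p/2 < f := by rw [hmf, hef] at hmfp; linarith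
          have hgp : 1 - p/2 < g := by rw [hmg, heg] at hmgp; linarith
          have : 1 - p/2 < min f g := lt_min hfp hgp
          linarith [hmin]
    · -- case iii : h > 1-p
      have h3 := c3 hc'
      have hE : f - g - δ*(mf + mg) ≤ -(δ*mg) := by linarith
      rcases le_or_gt (p/4) mg with hm|hm
      · have : δ*(p/4) ≤ δ*mg := mul_le_mul_of_nonneg_left hm hδ0.le
        linarith
      · rcases min_cases g (1-g) with ⟨heg, _⟩|⟨heg, hleg⟩
        · exfalso
          have hgp : g < p/4 := by rw [hmg, heg] at hm; exact hm
          have hfs : f ≤ 3/8 := by linarith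
          have : max f g ≤ 3/8 := max_le hfs (by linarith)
          linarith [hmax]
        · have hgp : 1 - p/4 < g := by rw [hmg, heg] at hm; linarith
          have t1 : (1-lam)*(1-p/4) ≤ (1-lam)*g := mul_le_mul_of_nonneg_left hgp.le hl1'
          have t2 : (1-lam)*(p/4) ≤ p/4 := by nlinarith [mul_nonneg hl0.le hp0.le]
          have hlf : lam*f ≤ lam - p/2 := by nlinarith
          have hfs : f ≤ 1 - p/2 := by nlinarith [mul_nonneg (by linarith : (0:ℝ) ≤ 1-f) hl1']
          have hfg4 : f - g ≤ -(p/4) := by linarith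
          have : δ*p ≤ p := by nlinarith [mul_nonneg hp0.le (by linarith : (0:ℝ) ≤ 1 - δ)]
          linarith






lemma pert_eq_max {δ : ℝ} (h0 : 0 ≤ δ) (u : ℝ) :
    u - δ * min u (1-u) = max ((1-δ)*u) ((1+δ)*u - δ) := by
  rcases le_total u (1-u) with h|h
  · rw [min_eq_left h, max_eq_left (by nlinarith)]; ring
  · rw [min_eq_right h, max_eq_right (by nlinarith)]; ring

lemma pert_eq_min {δ : ℝ} (h0 : 0 ≤ δ) (u : ℝ) :
    u + δ * min u (1-u) = min ((1+δ)*u) ((1-δ)*u + δ) := by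
  rcases le_total u (1-u) with h|h
  · rw [min_eq_left h, min_eq_left (by nlinarith)]; ring
  · rw [min_eq_right h, min_eq_right (by nlinarith)]; ring

lemma pert_sub_mono {δ : ℝ} (h0 : 0 ≤ δ) (h1 : δ ≤ 1) {s t : ℝ} (hst : s ≤ t) :
    s - δ * min s (1-s) ≤ t - δ * min t (1-t) := by
  rw [pert_eq_max h0, pert_eq_max h0]
  refine max_le_max ?_ ?_ <;> nlinarith [mul_nonneg (by linarith : (0:ℝ) ≤ 1-δ) (by linarith : (0:ℝ) ≤ t - s), mul_nonneg (by linarith : (0:ℝ) ≤ 1+δ) (by linarith : (0:ℝ) ≤ t - s)]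

lemma pert_add_mono {δ : ℝ} (h0 : 0 ≤ δ) (h1 : δ ≤ 1) {s t : ℝ} (hst : s ≤ t) :
    s + δ * min s (1-s) ≤ t + δ * min t (1-t) := by
  rw [pert_eq_min h0, pert_eq_min h0]
  refine min_le_min ?_ ?_ <;> nlinarith [mul_nonneg (by linarith : (0:ℝ) ≤ 1-δ) (by linarith : (0:ℝ) ≤ t - s), mul_nonneg (by linarith : (0:ℝ) ≤ 1+δ) (by linarith : (0:ℝ) ≤ t - s)]

/-- The downward perturbation `F - δ·min(F, 1-F)` as a CDF. -/
noncomputable def pertSub (F : CDF) {δ : ℝ} (h0 : 0 ≤ δ) (h1 : δ ≤ 1) : CDF := by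
  refine ⟨⟨⟨fun x => F.1 x - δ * min (F.1 x) (1 - F.1 x), ?_⟩, ?_⟩, ?_, ?_, ?_⟩
  · exact F.1.continuous.sub (continuous_const.mul (F.1.continuous.min (continuous_const.sub F.1.continuous)))
  · refine ⟨3, fun x y => ?_⟩
    obtain ⟨hx0, hx1⟩ := mono_bdd F.2.1 F.2.2.1 F.2.2.2 x
    obtain ⟨hy0, hy1⟩ := mono_bdd F.2.1 F.2.2.1 F.2.2.2 y
    have mx0 : 0 ≤ min (F.1 x) (1 - F.1 x) := le_min hx0 (by linarith)
    have mx1 : min (F.1 x) (1 - F.1 x) ≤ 1 := le_trans (min_le_left _ _) hx1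
    have my0 : 0 ≤ min (F.1 y) (1 - F.1 y) := le_min hy0 (by linarith)
    have my1 : min (F.1 y) (1 - F.1 y) ≤ 1 := le_trans (min_le_left _ _) hy1
    have px : δ * min (F.1 x) (1 - F.1 x) ≤ 1 := mul_le_one₀ h1 mx0 mx1
    have px0 : 0 ≤ δ * min (F.1 x) (1 - F.1 x) := mul_nonneg h0 mx0
    have py : δ * min (F.1 y) (1 - F.1 y) ≤ 1 := mul_le_one₀ h1 my0 my1
    have py0 : 0 ≤ δ * min (F.1 y) (1 - F.1 y) := mul_nonneg h0 my0
    rw [Real.dist_eq]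
    rw [abs_le]
    constructor <;> simp only <;> linarith
  · exact fun a b hab => pert_sub_mono h0 h1 (F.2.1 hab)
  · have hc : Continuous (fun u : ℝ => u - δ * min u (1-u)) :=
      continuous_id.sub (continuous_const.mul (continuous_id.min (continuous_const.sub continuous_id)))
    have h := (hc.tendsto 0).comp F.2.2.1
    simp only [Function.comp_def] at h
    norm_num at h
    exact h
  · have hc : Continuous (fun u : ℝ => u - δ * min u (1-u)) :=
      continuous_id.sub (continuous_const.mul (continuous_id.min (continuous_const.sub continuous_id)))
    have h := (hc.tendsto 1).comp F.2.2.2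
    simp only [Function.comp_def] at h
    norm_num at h
    exact h

/-- The upward perturbation `G + δ·min(G, 1-G)` as a CDF. -/
noncomputable def pertAdd (F : CDF) {δ : ℝ} (h0 : 0 ≤ δ) (h1 : δ ≤ 1) : CDF := by
  refine ⟨⟨⟨fun x => F.1 x + δ * min (F.1 x) (1 - F.1 x), ?_⟩, ?_⟩, ?_, ?_, ?_⟩
  · exact F.1.continuous.add (continuous_const.mul (F.1.continuous.min (continuous_const.sub F.1.continuous)))
  · refine ⟨3, fun x y => ?_⟩
    obtain ⟨hx0, hx1⟩ := mono_bdd F.2.1 F.2.2.1 F.2.2.2 x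
    obtain ⟨hy0, hy1⟩ := mono_bdd F.2.1 F.2.2.1 F.2.2.2 y
    have mx0 : 0 ≤ min (F.1 x) (1 - F.1 x) := le_min hx0 (by linarith)
    have mx1 : min (F.1 x) (1 - F.1 x) ≤ 1 := le_trans (min_le_left _ _) hx1
    have my0 : 0 ≤ min (F.1 y) (1 - F.1 y) := le_min hy0 (by linarith)
    have my1 : min (F.1 y) (1 - F.1 y) ≤ 1 := le_trans (min_le_left _ _) hy1
    have px : δ * min (F.1 x) (1 - F.1 x) ≤ 1 := mul_le_one₀ h1 mx0 mx1
    have px0 : 0 ≤ δ * min (F.1 x) (1 - F.1 x) := mul_nonneg h0 mx0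
    have py : δ * min (F.1 y) (1 - F.1 y) ≤ 1 := mul_le_one₀ h1 my0 my1
    have py0 : 0 ≤ δ * min (F.1 y) (1 - F.1 y) := mul_nonneg h0 my0
    rw [Real.dist_eq]
    rw [abs_le]
    constructor <;> simp only <;> linarith
  · exact fun a b hab => pert_add_mono h0 h1 (F.2.1 hab)
  · have hc : Continuous (fun u : ℝ => u + δ * min u (1-u)) :=
      continuous_id.add (continuous_const.mul (continuous_id.min (continuous_const.sub continuous_id)))
    have h := (hc.tendsto 0).comp F.2.2.1
    simp only [Function.comp_def] at h
    norm_num at h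
    exact h
  · have hc : Continuous (fun u : ℝ => u + δ * min u (1-u)) :=
      continuous_id.add (continuous_const.mul (continuous_id.min (continuous_const.sub continuous_id)))
    have h := (hc.tendsto 1).comp F.2.2.2
    simp only [Function.comp_def] at h
    norm_num at h
    exact h

lemma mix_props (lam : ℝ) (hl0 : 0 < lam) (hl1 : lam < 1) (F G : CDF) :
    Continuous (fun x => lam * F.1 x + (1-lam) * G.1 x) ∧
    Monotone (fun x => lam * F.1 x + (1-lam) * G.1 x) ∧
    Tendsto (fun x => lam * F.1 x + (1-lam) * G.1 x) atBot (𝓝 0) ∧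
    Tendsto (fun x => lam * F.1 x + (1-lam) * G.1 x) atTop (𝓝 1) := by
  refine ⟨(continuous_const.mul F.1.continuous).add (continuous_const.mul G.1.continuous),
    fun a b hab => add_le_add (mul_le_mul_of_nonneg_left (F.2.1 hab) hl0.le)
      (mul_le_mul_of_nonneg_left (G.2.1 hab) (by linarith)), ?_, ?_⟩
  · have h := (F.2.2.1.const_mul lam).add (G.2.2.1.const_mul (1-lam))
    have e : lam * 0 + (1-lam) * 0 = (0:ℝ) := by ring
    rwa [e] at h
  · have h := (F.2.2.2.const_mul lam).add (G.2.2.2.const_mul (1-lam))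
    have e : lam * 1 + (1-lam) * 1 = (1:ℝ) := by ring
    rwa [e] at h

lemma min_half (t : ℝ) : min t (1-t) ≤ 1/2 := by
  rcases le_total t (1-t) with h|h
  · rw [min_eq_left h]; linarith
  · rw [min_eq_right h]; linarith


theorem stmt_1 (lam p : ℝ) (hlam : lam ∈ Set.Ioo (0 : ℝ) 1)
    (hp : p ∈ Set.Ioo (0 : ℝ) (1 / 2)) :
    {FG : CDF × CDF | supDiff lam p FG = 0} ⊆ frontier (H1 lam p) ∧
    ∀ FG : CDF × CDF, supDiff lam p FG = 0 →
      ∀ ε : ℝ, 0 < ε → ∃ FG' : CDF × CDF, supDiff lam p FG' < 0 ∧ dist FG FG' < ε := by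
  obtain ⟨hl0, hl1⟩ := hlam
  obtain ⟨hp0, hp2⟩ := hp
  have hl1' : (0:ℝ) < 1 - lam := by linarith
  have main : ∀ FG : CDF × CDF, supDiff lam p FG = 0 →
      ∀ ε : ℝ, 0 < ε → ∃ FG' : CDF × CDF, supDiff lam p FG' < 0 ∧ dist FG FG' < ε := by
    intro FG hsup ε hε
    set δ := min (p/2) (ε/2) with hδdef
    have hδ0 : 0 < δ := lt_min (by linarith) (by linarith)
    have hδp : δ ≤ p/2 := min_le_left _ _
    have hδε : δ ≤ ε/2 := min_le_right _ _
    have hδ1 : δ ≤ 1 := by linarith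
    set F := FG.1 with hFdef
    set G := FG.2 with hGdef
    set Ft := pertSub F hδ0.le hδ1 with hFt
    set Gt := pertAdd G hδ0.le hδ1 with hGt
    have hFb := mono_bdd F.2.1 F.2.2.1 F.2.2.2
    have hGb := mono_bdd G.2.1 G.2.2.1 G.2.2.2
    obtain ⟨hHc, hHm, hH0, hH1⟩ := mix_props lam hl0 hl1 F G
    obtain ⟨hKc, hKm, hK0, hK1⟩ := mix_props lam hl0 hl1 Ft Gt
    set H : ℝ → ℝ := fun x => lam * F.1 x + (1-lam) * G.1 x with hHdef
    set K : ℝ → ℝ := fun x => lam * Ft.1 x + (1-lam) * Gt.1 x with hKdef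
    obtain ⟨hHp, hHpi⟩ := qinv_spec hHc hHm hH0 hH1 hp0 (by linarith : p < 1)
    obtain ⟨hHq, hHqi⟩ := qinv_spec hHc hHm hH0 hH1 (by linarith : (0:ℝ) < 1-p) (by linarith : 1-p < 1)
    obtain ⟨hKp, hKpi⟩ := qinv_spec hKc hKm hK0 hK1 hp0 (by linarith : p < 1)
    obtain ⟨hKq, hKqi⟩ := qinv_spec hKc hKm hK0 hK1 (by linarith : (0:ℝ) < 1-p) (by linarith : 1-p < 1)
    set qp := qinv H p with hqp
    set qq := qinv H (1-p) with hqq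
    set rp := qinv K p with hrp
    set rq := qinv K (1-p) with hrq
    have hqpqq : qp ≤ qq := (hHpi qq).1 (by rw [hHq]; linarith)
    have hrprq : rp ≤ rq := (hKpi rq).1 (by rw [hKq]; linarith)
    -- the hypothesis : F - G ≤ 0 on Dp(F,G)
    have hbdd : BddAbove ((fun x => F.1 x - G.1 x) '' Dp lam p ⇑F.1 ⇑G.1) := by
      refine ⟨1, ?_⟩
      rintro _ ⟨z, hz, rfl⟩
      simp only
      linarith [(hFb z).2, (hGb z).1]
    have hsup' : sSup ((fun x => F.1 x - G.1 x) '' Dp lam p ⇑F.1 ⇑G.1) = 0 := hsup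
    have hle : ∀ y, qp ≤ y → y ≤ qq → F.1 y - G.1 y ≤ 0 := by
      intro y h1 h2
      have hymem : y ∈ Dp lam p ⇑F.1 ⇑G.1 := ⟨h1, h2⟩
      have h3 := le_csSup hbdd (Set.mem_image_of_mem (fun x => F.1 x - G.1 x) hymem)
      rw [hsup'] at h3; exact h3
    have claimA : ∀ y, p ≤ H y → H y ≤ 1-p → F.1 y - G.1 y ≤ 0 := by
      intro y h1 h2
      have hy1 : qp ≤ y := (hHpi y).1 h1
      rcases le_or_gt y qq with h3|h3
      · exact hle y hy1 h3
      · have u1 : H y ≤ H qq := by rw [hHq]; exact h2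
        have u2 : H qq ≤ H y := hHm h3.le
        have e1 : lam * F.1 y + (1-lam) * G.1 y = lam * F.1 qq + (1-lam) * G.1 qq :=
          le_antisymm u1 u2
        have hf : F.1 qq ≤ F.1 y := F.2.1 h3.le
        have hg : G.1 qq ≤ G.1 y := G.2.1 h3.le
        have hq0 : F.1 qq - G.1 qq ≤ 0 := hle qq hqpqq le_rfl
        have hfq : F.1 y ≤ F.1 qq := by
          nlinarith [mul_nonneg hl1'.le (sub_nonneg.2 hg)]
        linarith
    refine ⟨(Ft, Gt), ?_, ?_⟩
    · -- supDiff (Ft, Gt) < 0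
      have hboundall : ∀ b ∈ ((fun x => Ft.1 x - Gt.1 x) '' Dp lam p ⇑Ft.1 ⇑Gt.1),
          b ≤ -(δ*p/4) := by
        rintro _ ⟨x, hx, rfl⟩
        have hx' : x ∈ Set.Icc rp rq := hx
        obtain ⟨hx1, hx2⟩ := hx'
        have eFt : Ft.1 x = F.1 x - δ * min (F.1 x) (1 - F.1 x) := rfl
        have eGt : Gt.1 x = G.1 x + δ * min (G.1 x) (1 - G.1 x) := rfl
        have hKx1 : p ≤ K x := by rw [← hKp]; exact hKm hx1
        have hKx2 : K x ≤ 1-p := by rw [← hKq]; exact hKm hx2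
        have eK : K x = lam * F.1 x + (1-lam) * G.1 x
            - lam * (δ * min (F.1 x) (1 - F.1 x)) + (1-lam) * (δ * min (G.1 x) (1 - G.1 x)) := by
          simp only [hKdef, eFt, eGt]; ring
        have mf0 : 0 ≤ min (F.1 x) (1 - F.1 x) := le_min (hFb x).1 (by linarith [(hFb x).2])
        have mg0 : 0 ≤ min (G.1 x) (1 - G.1 x) := le_min (hGb x).1 (by linarith [(hGb x).2])
        have pr1 : 0 ≤ lam * (δ * min (F.1 x) (1 - F.1 x)) :=
          mul_nonneg hl0.le (mul_nonneg hδ0.le mf0)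
        have pr2 : 0 ≤ (1-lam) * (δ * min (G.1 x) (1 - G.1 x)) :=
          mul_nonneg hl1'.le (mul_nonneg hδ0.le mg0)
        have hlo : p ≤ lam * F.1 x + (1-lam) * G.1 x
            + δ*(1-lam)*min (G.1 x) (1 - G.1 x) := by
          rw [eK] at hKx1; linarith
        have hhi : lam * F.1 x + (1-lam) * G.1 x ≤ 1-p
            + δ*lam*min (F.1 x) (1 - F.1 x) := by
          rw [eK] at hKx2; linarith
        have c1 : p ≤ lam * F.1 x + (1-lam) * G.1 x →
            lam * F.1 x + (1-lam) * G.1 x ≤ 1-p → F.1 x ≤ G.1 x := by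
          intro h1 h2
          have := claimA x h1 h2
          linarith
        have c2 : lam * F.1 x + (1-lam) * G.1 x < p →
            F.1 x - G.1 x ≤ δ * min (G.1 x) (1 - G.1 x) := by
          intro hlt
          have hHx : H x < p := hlt
          have hxlt : x < qp := not_le.1 (fun hcon => absurd ((hHpi x).2 hcon) (not_le.2 hHx))
          have hfq : F.1 x ≤ F.1 qp := F.2.1 hxlt.le
          have hq0 : F.1 qp - G.1 qp ≤ 0 := hle qp le_rfl hqpqq
          have e1 : lam * F.1 qp + (1-lam) * G.1 qp = p := hHp
          have hf2 : lam * F.1 x ≤ lam * F.1 qp := mul_le_mul_of_nonneg_left hfq hl0.le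
          -- (1-lam)*(G qp - G x) ≤ p - H x ≤ (1-lam)*(δ*mg)
          have hgap : (1-lam) * (G.1 qp - G.1 x) ≤ (1-lam) * (δ * min (G.1 x) (1 - G.1 x)) := by
            rw [eK] at hKx1
            linarith
          have hgap' : G.1 qp - G.1 x ≤ δ * min (G.1 x) (1 - G.1 x) :=
            (mul_le_mul_iff_right₀ hl1').1 hgap
          linarith
        have c3 : 1-p < lam * F.1 x + (1-lam) * G.1 x →
            F.1 x - G.1 x ≤ δ * min (F.1 x) (1 - F.1 x) := by
          intro hgt
          have hHx : 1-p ≤ H x := hgt.le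
          have hxq : qq ≤ x := (hHqi x).1 hHx
          have hgq : G.1 qq ≤ G.1 x := G.2.1 hxq
          have hq0 : F.1 qq - G.1 qq ≤ 0 := hle qq hqpqq le_rfl
          have e1 : lam * F.1 qq + (1-lam) * G.1 qq = 1-p := hHq
          have hg2 : (1-lam) * G.1 qq ≤ (1-lam) * G.1 x := mul_le_mul_of_nonneg_left hgq hl1'.le
          have hgap : lam * (F.1 x - F.1 qq) ≤ lam * (δ * min (F.1 x) (1 - F.1 x)) := by
            rw [eK] at hKx2
            linarith
          have hgap' : F.1 x - F.1 qq ≤ δ * min (F.1 x) (1 - F.1 x) :=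
            (mul_le_mul_iff_right₀ hl0).1 hgap
          linarith
        have key := key_arith lam p δ (F.1 x) (G.1 x) hl0 hl1 hp0 hp2 hδ0 hδp
          (hFb x).1 (hFb x).2 (hGb x).1 (hGb x).2 hlo hhi c1 c2 c3
        simp only
        rw [eFt, eGt]
        linarith
      have hne : ((fun x => Ft.1 x - Gt.1 x) '' Dp lam p ⇑Ft.1 ⇑Gt.1).Nonempty := by
        refine ⟨_, Set.mem_image_of_mem _ (show rp ∈ Dp lam p ⇑Ft.1 ⇑Gt.1 from ⟨le_rfl, hrprq⟩)⟩
      have hfin : supDiff lam p (Ft, Gt) ≤ -(δ*p/4) := csSup_le hne hboundall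
      linarith [mul_pos hδ0 hp0]
    · -- dist < ε
      rw [Prod.dist_eq]
      have d1 : dist F Ft ≤ δ/2 := by
        rw [Subtype.dist_eq]
        rw [BoundedContinuousFunction.dist_le (by linarith : (0:ℝ) ≤ δ/2)]
        intro x
        have eFt : Ft.1 x = F.1 x - δ * min (F.1 x) (1 - F.1 x) := rfl
        have mf0 : 0 ≤ min (F.1 x) (1 - F.1 x) := le_min (hFb x).1 (by linarith [(hFb x).2])
        have mfh := min_half (F.1 x)
        rw [Real.dist_eq, eFt]
        rw [abs_le]
        constructor <;> linarith [mul_nonneg hδ0.le mf0, mul_le_mul_of_nonneg_left mfh hδ0.le]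
      have d2 : dist G Gt ≤ δ/2 := by
        rw [Subtype.dist_eq]
        rw [BoundedContinuousFunction.dist_le (by linarith : (0:ℝ) ≤ δ/2)]
        intro x
        have eGt : Gt.1 x = G.1 x + δ * min (G.1 x) (1 - G.1 x) := rfl
        have mg0 : 0 ≤ min (G.1 x) (1 - G.1 x) := le_min (hGb x).1 (by linarith [(hGb x).2])
        have mgh := min_half (G.1 x)
        rw [Real.dist_eq, eGt]
        rw [abs_le]
        constructor <;> linarith [mul_nonneg hδ0.le mg0, mul_le_mul_of_nonneg_left mgh hδ0.le]
      exact max_lt (by linarith) (by linarith)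
  refine ⟨?_, main⟩
  intro FG hFG
  simp only [Set.mem_setOf_eq] at hFG
  rw [frontier, Set.mem_diff]
  constructor
  · rw [Metric.mem_closure_iff]
    intro ε hε
    obtain ⟨FG', h1, h2⟩ := main FG hFG ε hε
    exact ⟨FG', h1, h2⟩
  · intro hint
    have h1 : FG ∈ H1 lam p := interior_subset hint
    have h2 : supDiff lam p FG < 0 := h1
    rw [hFG] at h2
    exact absurd h2 (lt_irrefl 0)
end

section
/- Let λ ∈ (0,1) and a, b > 0, and set σ² = (λa² + (1−λ)b²)/(λa + (1−λ)b)². Then: (A) σ² = 1 if and only if a = b, and otherwise 1 < σ² ≤ max{(1−λ)⁻¹, λ⁻¹}; (B) for every ε ∈ (0, 2(1−λ)/λ) there exists a constant C_λ > 0, depending only on λ, such that b/a < C_λ implies σ² > λ⁻¹ − ε; (C) for every ε ∈ (0, 2λ/(1−λ)) there exists a constant C'_λ > 0, depending only on λ, such that a/b < C'_λ implies σ² > (1−λ)⁻¹ − ε. -/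
open Set

noncomputable def sigma2TSEP (lam a b : ℝ) : ℝ :=
  (lam * a ^ 2 + (1 - lam) * b ^ 2) / (lam * a + (1 - lam) * b) ^ 2

lemma sigma2_symm (lam a b : ℝ) : sigma2TSEP lam a b = sigma2TSEP (1 - lam) b a := by
  unfold sigma2TSEP; ring_nf

lemma helperB (lam : ℝ) (h0 : 0 < lam) (h1 : lam < 1) (ε : ℝ) (hε : 0 < ε) :
    ∃ C : ℝ, 0 < C ∧ ∀ a b : ℝ, 0 < a → 0 < b → b / a < C →
      lam⁻¹ - ε < sigma2TSEP lam a b := by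
  have h1' : 0 < 1 - lam := by linarith
  refine ⟨min 1 (ε * lam ^ 3 / 3), lt_min one_pos (by positivity), ?_⟩
  intro a b ha hb hC
  have hb1 : b < a := by
    have := lt_of_lt_of_le hC (min_le_left _ _)
    rw [div_lt_one ha] at this; linarith
  have hb2 : 3 * b < ε * lam ^ 3 * a := by
    have := lt_of_lt_of_le hC (min_le_right _ _)
    rw [div_lt_iff₀ ha] at this; nlinarith
  have hD : 0 < lam * a + (1 - lam) * b := by positivity
  unfold sigma2TSEP
  rw [lt_div_iff₀ (by positivity)]
  have hstep1 : 0 ≤ ε * lam * ((1 - lam) * b) * (2 * lam * a + (1 - lam) * b) := by positivity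
  have key : (1 - ε * lam) * (lam * a + (1 - lam) * b) ^ 2
      < lam * (lam * a ^ 2 + (1 - lam) * b ^ 2) := by
    have e1 : ε * lam ^ 3 * a ^ 2 ≤ ε * lam * (lam * a + (1 - lam) * b) ^ 2 := by
      nlinarith [hstep1]
    have e2 : 3 * (a * b) < ε * lam ^ 3 * a ^ 2 := by
      nlinarith [mul_lt_mul_of_pos_left hb2 ha]
    have e3 : (1 - lam) * b * (2 * lam * a + (1 - 2 * lam) * b) ≤ 3 * (a * b) := by
      nlinarith [mul_pos ha hb, mul_pos hb hb, sq_nonneg (2 * lam - 1),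
        mul_lt_mul_of_pos_right hb1 hb,
        mul_pos (mul_pos h0 (show (0:ℝ) < 3 - 2 * lam by linarith)) (mul_pos hb hb)]
    nlinarith [e1, e2, e3]
  calc (lam⁻¹ - ε) * (lam * a + (1 - lam) * b) ^ 2
      = lam⁻¹ * ((1 - ε * lam) * (lam * a + (1 - lam) * b) ^ 2) := by
        field_simp
    _ < lam⁻¹ * (lam * (lam * a ^ 2 + (1 - lam) * b ^ 2)) :=
        mul_lt_mul_of_pos_left key (inv_pos.mpr h0)
    _ = lam * a ^ 2 + (1 - lam) * b ^ 2 := by field_simp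

theorem stmt_8 (lam : ℝ) (hlam : lam ∈ Set.Ioo (0 : ℝ) 1) :
    (∀ a b : ℝ, 0 < a → 0 < b →
      ((sigma2TSEP lam a b = 1 ↔ a = b) ∧
        (a ≠ b → 1 < sigma2TSEP lam a b ∧
          sigma2TSEP lam a b ≤ max (1 - lam)⁻¹ lam⁻¹))) ∧
    (∀ ε : ℝ, ε ∈ Set.Ioo (0 : ℝ) (2 * (1 - lam) / lam) →
      ∃ C : ℝ, 0 < C ∧ ∀ a b : ℝ, 0 < a → 0 < b → b / a < C →
        lam⁻¹ - ε < sigma2TSEP lam a b) ∧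
    (∀ ε : ℝ, ε ∈ Set.Ioo (0 : ℝ) (2 * lam / (1 - lam)) →
      ∃ C : ℝ, 0 < C ∧ ∀ a b : ℝ, 0 < a → 0 < b → a / b < C →
        (1 - lam)⁻¹ - ε < sigma2TSEP lam a b) := by
  obtain ⟨h0, h1⟩ := hlam
  have h1' : 0 < 1 - lam := by linarith
  refine ⟨?_, ?_, ?_⟩
  · intro a b ha hb
    have hD : 0 < lam * a + (1 - lam) * b := by positivity
    have hD2 : (0:ℝ) < (lam * a + (1 - lam) * b) ^ 2 := by positivity
    constructor
    · constructor
      · intro h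
        unfold sigma2TSEP at h
        rw [div_eq_one_iff_eq (ne_of_gt hD2)] at h
        have hsq : (a - b) ^ 2 = 0 := by nlinarith [mul_pos h0 h1']
        have := pow_eq_zero_iff (n := 2) (by norm_num) |>.mp hsq
        linarith [sub_eq_zero.mp this]
      · rintro rfl
        unfold sigma2TSEP
        rw [div_eq_one_iff_eq (ne_of_gt hD2)]
        ring
    · intro hab
      have hab' : a - b ≠ 0 := sub_ne_zero.mpr hab
      have hsq : 0 < (a - b) ^ 2 := by positivity
      constructor
      · unfold sigma2TSEP
        rw [lt_div_iff₀ hD2]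
        nlinarith [mul_pos (mul_pos h0 h1') hsq]
      · rcases le_total b a with hle | hle
        · refine le_trans ?_ (le_max_right _ _)
          unfold sigma2TSEP
          rw [div_le_iff₀ hD2, inv_mul_eq_div, le_div_iff₀ h0]
          have key : 0 ≤ (1 - lam) * b * (2 * lam * a + (1 - 2 * lam) * b) := by
            apply mul_nonneg (mul_nonneg h1'.le hb.le); nlinarith
          nlinarith [key]
        · refine le_trans ?_ (le_max_left _ _)
          unfold sigma2TSEP
          rw [div_le_iff₀ hD2, inv_mul_eq_div, le_div_iff₀ h1']
          have key : 0 ≤ lam * a * (2 * (1 - lam) * b + (2 * lam - 1) * a) := by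
            apply mul_nonneg (mul_nonneg h0.le ha.le); nlinarith
          nlinarith [key]
  · intro ε hε
    exact helperB lam h0 h1 ε hε.1
  · intro ε hε
    obtain ⟨C, hC, hC'⟩ := helperB (1 - lam) h1' (by linarith) ε hε.1
    refine ⟨C, hC, fun a b ha hb hab => ?_⟩
    rw [sigma2_symm]
    simpa using hC' b a hb ha hab
end

section
/- Let D ⊂ ℝ be a set on which the continuous cdfs F and G are bounded away from 0 and 1, i.e. there are 0 < c ≤ c' < 1 with F(x), G(x) ∈ [c, c'] for all x ∈ D. Let V₁, V₂ : [0,1] → ℝ be continuous functions, let (F_m) and (G_n) be sequences of cdfs with sup_{x∈ℝ}|√m(F_m(x) − F(x)) − V₁(F(x))| → 0 and sup_{x∈ℝ}|√n(G_n(x) − G(x)) − V₂(G(x))| → 0, and let m, n → ∞ with m/(m+n) → λ ∈ (0,1), N = m+n. Define ω_{m,n}(x) = (G_n(x) − F_m(x))/√(F_m(x)(1−F_m(x))/m + G_n(x)(1−G_n(x))/n), ω₀(x) = (√λ V₂(G(x)) − √(1−λ) V₁(F(x)))/√((1−λ)F(x)(1−F(x)) + λG(x)(1−G(x))), ϑ_{m,n}(x)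 = (n/N)F_m(x)(1−F_m(x)) + (m/N)G_n(x)(1−G_n(x)), and ϑ₀(x) = (1−λ)F(x)(1−F(x)) + λG(x)(1−G(x)). Then sup_{x∈D} |ω_{m,n}(x) − ω₀(x) − √(mn/N) ϑ_{m,n}(x)^{−1/2}(G(x) − F(x))| → 0 and sup_{x∈D} |ϑ_{m,n}(x)^{−1/2} − ϑ₀(x)^{−1/2}| → 0. -/
open Filter Topology

/-- The normalized two-sample statistic `ω_{m,n}`. -/
noncomputable def omegaMN (Fm Gn : ℝ → ℝ) (m n : ℕ) (x : ℝ) : ℝ :=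
  (Gn x - Fm x) /
    Real.sqrt (Fm x * (1 - Fm x) / (m : ℝ) + Gn x * (1 - Gn x) / (n : ℝ))

/-- The limiting process `ω₀`. -/
noncomputable def omega0 (lam : ℝ) (F G V1 V2 : ℝ → ℝ) (x : ℝ) : ℝ :=
  (Real.sqrt lam * V2 (G x) - Real.sqrt (1 - lam) * V1 (F x)) /
    Real.sqrt ((1 - lam) * (F x * (1 - F x)) + lam * (G x * (1 - G x)))

/-- The variance proxy `ϑ_{m,n}`. -/
noncomputable def vartheta (Fm Gn : ℝ → ℝ) (m n : ℕ) (x : ℝ) : ℝ :=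
  (n : ℝ) / ((m : ℝ) + (n : ℝ)) * (Fm x * (1 - Fm x)) +
    (m : ℝ) / ((m : ℝ) + (n : ℝ)) * (Gn x * (1 - Gn x))

/-- The limiting variance proxy `ϑ₀`. -/
noncomputable def vartheta0 (lam : ℝ) (F G : ℝ → ℝ) (x : ℝ) : ℝ :=
  (1 - lam) * (F x * (1 - F x)) + lam * (G x * (1 - G x))



lemma abs_sqrt_sub_sqrt_le' (a b : ℝ) (ha : 0 ≤ a) (hb : 0 ≤ b) :
    |Real.sqrt a - Real.sqrt b| ≤ Real.sqrt |a - b| := by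
  wlog hab : a ≤ b generalizing a b
  · have := this b a hb ha (le_of_not_ge hab)
    rwa [abs_sub_comm, abs_sub_comm a b]
  have hba : (0:ℝ) ≤ b - a := by linarith
  have h1 : Real.sqrt b ≤ Real.sqrt a + Real.sqrt (b - a) := by
    have hb2 : b ≤ (Real.sqrt a + Real.sqrt (b - a)) ^ 2 := by
      have e1 := Real.sq_sqrt ha
      have e2 := Real.sq_sqrt hba
      have e3 := Real.sqrt_nonneg a
      have e4 := Real.sqrt_nonneg (b - a)
      nlinarith
    calc Real.sqrt b ≤ Real.sqrt ((Real.sqrt a + Real.sqrt (b - a)) ^ 2) :=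
          Real.sqrt_le_sqrt hb2
      _ = Real.sqrt a + Real.sqrt (b - a) := Real.sqrt_sq (by positivity)
  have h2 : Real.sqrt a ≤ Real.sqrt b := Real.sqrt_le_sqrt hab
  have e1 : |Real.sqrt a - Real.sqrt b| = Real.sqrt b - Real.sqrt a := by
    rw [abs_of_nonpos (by linarith)]; ring
  have e2 : |a - b| = b - a := by rw [abs_of_nonpos (by linarith)]; ring
  rw [e1, e2]; linarith

lemma tuo_of_bound {F : ℕ → ℝ → ℝ} {f : ℝ → ℝ} {s : Set ℝ} {g : ℕ → ℝ}
    (hg : Tendsto g atTop (𝓝 0))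
    (h : ∀ᶠ k in atTop, ∀ x ∈ s, |F k x - f x| ≤ g k) :
    TendstoUniformlyOn F f atTop s := by
  rw [Metric.tendstoUniformlyOn_iff]
  intro ε hε
  filter_upwards [h, hg.eventually_lt_const hε] with k hk hkg x hx
  rw [Real.dist_eq, abs_sub_comm]
  exact lt_of_le_of_lt (hk x hx) hkg

lemma tuo_const {a : ℕ → ℝ} {a0 : ℝ} (h : Tendsto a atTop (𝓝 a0)) (s : Set ℝ) :
    TendstoUniformlyOn (fun k (_ : ℝ) => a k) (fun _ => a0) atTop s := by
  rw [Metric.tendstoUniformlyOn_iff]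
  intro ε hε
  filter_upwards [Metric.tendsto_nhds.mp h ε hε] with k hk x _
  rw [dist_comm]; exact hk

lemma tuo_self (f : ℝ → ℝ) (s : Set ℝ) :
    TendstoUniformlyOn (fun (_ : ℕ) x => f x) f atTop s := by
  rw [Metric.tendstoUniformlyOn_iff]
  intro ε hε
  filter_upwards with k x _
  simpa using hε

lemma tuo_mul {F H : ℕ → ℝ → ℝ} {f h : ℝ → ℝ} {s : Set ℝ} {C : ℝ}
    (hF : TendstoUniformlyOn F f atTop s) (hH : TendstoUniformlyOn H h atTop s)
    (hfb : ∀ x ∈ s, |f x| ≤ C) (hhb : ∀ x ∈ s, |h x| ≤ C) :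
    TendstoUniformlyOn (fun k x => F k x * H k x) (fun x => f x * h x) atTop s := by
  rcases s.eq_empty_or_nonempty with rfl | ⟨x0, hx0⟩
  · exact tendstoUniformlyOn_empty
  have hC : 0 ≤ C := le_trans (abs_nonneg _) (hfb x0 hx0)
  rw [Metric.tendstoUniformlyOn_iff] at *
  intro ε hε
  have hδpos : 0 < min 1 (ε / (2 * C + 2)) := by positivity
  filter_upwards [hF _ hδpos, hH _ hδpos] with k hFk hHk x hx
  set δ := min 1 (ε / (2 * C + 2)) with hδdef
  have h1 : |f x - F k x| < δ := by rw [← Real.dist_eq]; exact hFk x hx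
  have h2 : |h x - H k x| < δ := by rw [← Real.dist_eq]; exact hHk x hx
  rw [Real.dist_eq]
  have hδ1 : δ ≤ 1 := min_le_left _ _
  have hδ2' : δ * (2 * C + 2) ≤ ε := by
    have := min_le_right 1 (ε / (2 * C + 2))
    calc δ * (2 * C + 2) ≤ ε / (2 * C + 2) * (2 * C + 2) := by
          apply mul_le_mul_of_nonneg_right this (by linarith)
      _ = ε := by field_simp
  have hFk' : |F k x| ≤ C + 1 := by
    have t1 : |F k x| = |f x - (f x - F k x)| := by ring_nf
    have t2 : |f x - (f x - F k x)| ≤ |f x| + |f x - F k x| := abs_sub _ _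
    have := hfb x hx
    linarith [t1 ▸ t2]
  have key : |f x * h x - F k x * H k x| ≤ δ * (2 * C + 1) := by
    have e : f x * h x - F k x * H k x
        = (f x - F k x) * h x + F k x * (h x - H k x) := by ring
    calc |f x * h x - F k x * H k x|
        ≤ |(f x - F k x) * h x| + |F k x * (h x - H k x)| := by rw [e]; exact abs_add_le _ _
      _ = |f x - F k x| * |h x| + |F k x| * |h x - H k x| := by rw [abs_mul, abs_mul]
      _ ≤ δ * C + (C + 1) * δ := by
          have hhx := hhb x hx
          have b1 : |f x - F k x| * |h x| ≤ δ * C :=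
            mul_le_mul (le_of_lt h1) hhx (abs_nonneg _) (le_of_lt hδpos)
          have b2 : |F k x| * |h x - H k x| ≤ (C + 1) * δ :=
            mul_le_mul hFk' (le_of_lt h2) (abs_nonneg _) (by linarith)
          linarith
      _ = δ * (2 * C + 1) := by ring
  have hlt : δ * (2 * C + 1) < ε := by
    have : δ * (2 * C + 1) = δ * (2 * C + 2) - δ := by ring
    linarith
  linarith

lemma tuo_inv_sqrt {F : ℕ → ℝ → ℝ} {f : ℝ → ℝ} {s : Set ℝ} {d : ℝ} (hd : 0 < d)
    (hF : TendstoUniformlyOn F f atTop s) (hfd : ∀ x ∈ s, d ≤ f x) :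
    TendstoUniformlyOn (fun k x => (Real.sqrt (F k x))⁻¹) (fun x => (Real.sqrt (f x))⁻¹)
      atTop s := by
  rw [Metric.tendstoUniformlyOn_iff] at *
  intro ε hε
  set δ := min (d / 2) ((ε * (d / 2)) ^ 2 / 2) with hδdef
  have hδpos : 0 < δ := by positivity
  filter_upwards [hF δ hδpos] with k hk x hx
  have h1 : |f x - F k x| < δ := by rw [← Real.dist_eq]; exact hk x hx
  have hfx : d ≤ f x := hfd x hx
  have hFx : d / 2 ≤ F k x := by
    have h' : |f x - F k x| < d / 2 := lt_of_lt_of_le h1 (min_le_left _ _)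
    have := abs_lt.mp h'
    linarith [this.1, this.2]
  have hsf : Real.sqrt (d / 2) ≤ Real.sqrt (f x) := Real.sqrt_le_sqrt (by linarith)
  have hsF : Real.sqrt (d / 2) ≤ Real.sqrt (F k x) := Real.sqrt_le_sqrt hFx
  have hs2 : 0 < Real.sqrt (d / 2) := Real.sqrt_pos.mpr (by linarith)
  have hsfpos : 0 < Real.sqrt (f x) := lt_of_lt_of_le hs2 hsf
  have hsFpos : 0 < Real.sqrt (F k x) := lt_of_lt_of_le hs2 hsF
  rw [Real.dist_eq]
  have e : (Real.sqrt (f x))⁻¹ - (Real.sqrt (F k x))⁻¹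
      = (Real.sqrt (F k x) - Real.sqrt (f x)) / (Real.sqrt (f x) * Real.sqrt (F k x)) := by
    field_simp
  rw [e, abs_div]
  have hnum : |Real.sqrt (F k x) - Real.sqrt (f x)| ≤ Real.sqrt δ := by
    refine le_trans (abs_sqrt_sub_sqrt_le' _ _ (by linarith) (by linarith)) ?_
    apply Real.sqrt_le_sqrt
    rw [abs_sub_comm]; exact le_of_lt h1
  have hden : d / 2 ≤ |Real.sqrt (f x) * Real.sqrt (F k x)| := by
    rw [abs_of_pos (by positivity)]
    calc d / 2 = Real.sqrt (d / 2) * Real.sqrt (d / 2) :=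
          (Real.mul_self_sqrt (by linarith)).symm
      _ ≤ Real.sqrt (f x) * Real.sqrt (F k x) :=
          mul_le_mul hsf hsF (le_of_lt hs2) (le_of_lt hsfpos)
  have hδ2 : Real.sqrt δ < ε * (d / 2) := by
    have ht : 0 < (ε * (d / 2)) ^ 2 := by positivity
    have h4 : δ < (ε * (d / 2)) ^ 2 := lt_of_le_of_lt (min_le_right _ _) (by linarith)
    calc Real.sqrt δ < Real.sqrt ((ε * (d / 2)) ^ 2) :=
          Real.sqrt_lt_sqrt (le_of_lt hδpos) h4
      _ = ε * (d / 2) := Real.sqrt_sq (by positivity)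
  calc |Real.sqrt (F k x) - Real.sqrt (f x)| / |Real.sqrt (f x) * Real.sqrt (F k x)|
      ≤ Real.sqrt δ / (d / 2) := div_le_div₀ (Real.sqrt_nonneg δ) hnum (by linarith) hden
    _ < ε := (div_lt_iff₀ (by linarith)).mpr (by linarith [hδ2])


lemma tuo_add {F H : ℕ → ℝ → ℝ} {f h : ℝ → ℝ} {s : Set ℝ}
    (hF : TendstoUniformlyOn F f atTop s) (hH : TendstoUniformlyOn H h atTop s) :
    TendstoUniformlyOn (fun k x => F k x + H k x) (fun x => f x + h x) atTop s := by
  rw [Metric.tendstoUniformlyOn_iff] at *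
  intro ε hε
  filter_upwards [hF (ε/2) (by linarith), hH (ε/2) (by linarith)] with k h1 h2 x hx
  have a1 := h1 x hx
  have a2 := h2 x hx
  rw [Real.dist_eq] at *
  calc |f x + h x - (F k x + H k x)| = |(f x - F k x) + (h x - H k x)| := by ring_nf
    _ ≤ |f x - F k x| + |h x - H k x| := abs_add_le _ _
    _ < ε := by linarith

lemma tuo_sub {F H : ℕ → ℝ → ℝ} {f h : ℝ → ℝ} {s : Set ℝ}
    (hF : TendstoUniformlyOn F f atTop s) (hH : TendstoUniformlyOn H h atTop s) :
    TendstoUniformlyOn (fun k x => F k x - H k x) (fun x => f x - h x) atTop s := by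
  rw [Metric.tendstoUniformlyOn_iff] at *
  intro ε hε
  filter_upwards [hF (ε/2) (by linarith), hH (ε/2) (by linarith)] with k h1 h2 x hx
  have a1 := h1 x hx
  have a2 := h2 x hx
  rw [Real.dist_eq] at *
  calc |f x - h x - (F k x - H k x)| = |(f x - F k x) - (h x - H k x)| := by ring_nf
    _ ≤ |f x - F k x| + |h x - H k x| := abs_sub _ _
    _ < ε := by linarith

theorem stmt_10 (lam : ℝ) (hlam : lam ∈ Set.Ioo (0 : ℝ) 1)
    (D : Set ℝ) (c c' : ℝ) (hc : 0 < c) (hcc' : c ≤ c') (hc' : c' < 1)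
    (F G : ℝ → ℝ) (hFcont : Continuous F) (hGcont : Continuous G)
    (hFmono : Monotone F) (hGmono : Monotone G)
    (hF0 : Tendsto F atBot (𝓝 0)) (hF1 : Tendsto F atTop (𝓝 1))
    (hG0 : Tendsto G atBot (𝓝 0)) (hG1 : Tendsto G atTop (𝓝 1))
    (hFD : ∀ x ∈ D, F x ∈ Set.Icc c c') (hGD : ∀ x ∈ D, G x ∈ Set.Icc c c')
    (V1 V2 : ℝ → ℝ)
    (hV1 : ContinuousOn V1 (Set.Icc 0 1)) (hV2 : ContinuousOn V2 (Set.Icc 0 1))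
    (Fm Gn : ℕ → ℝ → ℝ) (m n : ℕ → ℕ)
    (hFm : ∀ k, Monotone (Fm k) ∧
      Tendsto (Fm k) atBot (𝓝 0) ∧ Tendsto (Fm k) atTop (𝓝 1))
    (hGn : ∀ k, Monotone (Gn k) ∧
      Tendsto (Gn k) atBot (𝓝 0) ∧ Tendsto (Gn k) atTop (𝓝 1))
    (hm : Tendsto m atTop atTop) (hn : Tendsto n atTop atTop)
    (hratio : Tendsto (fun k => (m k : ℝ) / ((m k : ℝ) + (n k : ℝ))) atTop (𝓝 lam))
    (hFconv : TendstoUniformly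
      (fun k x => Real.sqrt (m k : ℝ) * (Fm k x - F x)) (fun x => V1 (F x)) atTop)
    (hGconv : TendstoUniformly
      (fun k x => Real.sqrt (n k : ℝ) * (Gn k x - G x)) (fun x => V2 (G x)) atTop) :
    TendstoUniformlyOn
      (fun k x => omegaMN (Fm k) (Gn k) (m k) (n k) x - omega0 lam F G V1 V2 x -
        Real.sqrt ((m k : ℝ) * (n k : ℝ) / ((m k : ℝ) + (n k : ℝ))) *
          (Real.sqrt (vartheta (Fm k) (Gn k) (m k) (n k) x))⁻¹ * (G x - F x))
      (fun _ => 0) atTop D ∧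
    TendstoUniformlyOn
      (fun k x => (Real.sqrt (vartheta (Fm k) (Gn k) (m k) (n k) x))⁻¹)
      (fun x => (Real.sqrt (vartheta0 lam F G x))⁻¹) atTop D := by
  obtain ⟨hl0, hl1⟩ := hlam
  -- ranges of F and G
  have hF01 : ∀ x, 0 ≤ F x ∧ F x ≤ 1 := fun x =>
    ⟨le_of_tendsto hF0 (eventually_atBot.mpr ⟨x, fun y hy => hFmono hy⟩),
     ge_of_tendsto hF1 (eventually_atTop.mpr ⟨x, fun y hy => hFmono hy⟩)⟩
  have hG01 : ∀ x, 0 ≤ G x ∧ G x ≤ 1 := fun x =>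
    ⟨le_of_tendsto hG0 (eventually_atBot.mpr ⟨x, fun y hy => hGmono hy⟩),
     ge_of_tendsto hG1 (eventually_atTop.mpr ⟨x, fun y hy => hGmono hy⟩)⟩
  -- bounds for V1, V2
  obtain ⟨M1, hM1⟩ := isCompact_Icc.exists_bound_of_continuousOn hV1
  obtain ⟨M2, hM2⟩ := isCompact_Icc.exists_bound_of_continuousOn hV2
  have hM1' : ∀ x, |V1 (F x)| ≤ M1 := fun x => by
    have := hM1 (F x) ⟨(hF01 x).1, (hF01 x).2⟩
    rwa [Real.norm_eq_abs] at this
  have hM2' : ∀ x, |V2 (G x)| ≤ M2 := fun x => by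
    have := hM2 (G x) ⟨(hG01 x).1, (hG01 x).2⟩
    rwa [Real.norm_eq_abs] at this
  have hM1nn : 0 ≤ M1 := le_trans (abs_nonneg _) (hM1' 0)
  have hM2nn : 0 ≤ M2 := le_trans (abs_nonneg _) (hM2' 0)
  -- eventual positivity of m,n
  have hmn : ∀ᶠ k in atTop, 1 ≤ m k ∧ 1 ≤ n k :=
    (hm.eventually_ge_atTop 1).and (hn.eventually_ge_atTop 1)
  -- scalar limits
  have hratio' : Tendsto (fun k => (n k : ℝ) / ((m k : ℝ) + (n k : ℝ))) atTop
      (𝓝 (1 - lam)) := by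
    apply Tendsto.congr' _ (tendsto_const_nhds.sub hratio)
    filter_upwards [hmn] with k hk
    have ha : (1:ℝ) ≤ (m k : ℝ) := by exact_mod_cast hk.1
    have hb : (1:ℝ) ≤ (n k : ℝ) := by exact_mod_cast hk.2
    have hN : ((m k : ℝ) + (n k : ℝ)) ≠ 0 := by positivity
    field_simp
    ring
  have hs_lam : Tendsto (fun k => Real.sqrt ((m k:ℝ)/((m k:ℝ)+(n k:ℝ)))) atTop
      (𝓝 (Real.sqrt lam)) := hratio.sqrt
  have hs_lam' : Tendsto (fun k => Real.sqrt ((n k:ℝ)/((m k:ℝ)+(n k:ℝ)))) atTop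
      (𝓝 (Real.sqrt (1 - lam))) := hratio'.sqrt
  -- sqrt m, sqrt n tend to infinity
  have hsqrt_atTop : ∀ (p : ℕ → ℕ), Tendsto p atTop atTop →
      Tendsto (fun k => Real.sqrt (p k : ℝ)) atTop atTop := by
    intro p hp
    rw [tendsto_atTop_atTop]
    intro b
    have h1 := hp.eventually_ge_atTop (Nat.ceil ((max b 0) ^ 2))
    rw [eventually_atTop] at h1
    obtain ⟨K, hK⟩ := h1
    refine ⟨K, fun k hk => ?_⟩
    have h2 : (max b 0) ^ 2 ≤ (p k : ℝ) := by
      refine le_trans (Nat.le_ceil _) ?_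
      exact_mod_cast hK k hk
    calc b ≤ max b 0 := le_max_left _ _
      _ = Real.sqrt ((max b 0) ^ 2) := (Real.sqrt_sq (le_max_right _ _)).symm
      _ ≤ Real.sqrt (p k : ℝ) := Real.sqrt_le_sqrt h2
  have hsm := hsqrt_atTop m hm
  have hsn := hsqrt_atTop n hn
  -- uniform boundedness of the empirical processes
  have hFb : ∀ᶠ k in atTop, ∀ x, |Real.sqrt (m k:ℝ) * (Fm k x - F x)| ≤ M1 + 1 := by
    filter_upwards [Metric.tendstoUniformly_iff.mp hFconv 1 one_pos] with k hk x
    have h1 := hk x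
    rw [Real.dist_eq] at h1
    have h2 := hM1' x
    have t1 : |Real.sqrt (m k:ℝ) * (Fm k x - F x)|
        = |V1 (F x) - (V1 (F x) - Real.sqrt (m k:ℝ) * (Fm k x - F x))| := by ring_nf
    have t2 : |V1 (F x) - (V1 (F x) - Real.sqrt (m k:ℝ) * (Fm k x - F x))|
        ≤ |V1 (F x)| + |V1 (F x) - Real.sqrt (m k:ℝ) * (Fm k x - F x)| := abs_sub _ _
    linarith [t1 ▸ t2]
  have hGb : ∀ᶠ k in atTop, ∀ x, |Real.sqrt (n k:ℝ) * (Gn k x - G x)| ≤ M2 + 1 := by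
    filter_upwards [Metric.tendstoUniformly_iff.mp hGconv 1 one_pos] with k hk x
    have h1 := hk x
    rw [Real.dist_eq] at h1
    have h2 := hM2' x
    have t1 : |Real.sqrt (n k:ℝ) * (Gn k x - G x)|
        = |V2 (G x) - (V2 (G x) - Real.sqrt (n k:ℝ) * (Gn k x - G x))| := by ring_nf
    have t2 : |V2 (G x) - (V2 (G x) - Real.sqrt (n k:ℝ) * (Gn k x - G x))|
        ≤ |V2 (G x)| + |V2 (G x) - Real.sqrt (n k:ℝ) * (Gn k x - G x)| := abs_sub _ _
    linarith [t1 ▸ t2]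
  -- uniform convergence Fm → F, Gn → G on D
  have hFmunif : TendstoUniformlyOn (fun k x => Fm k x) F atTop D := by
    apply tuo_of_bound (g := fun k => (M1 + 1) / Real.sqrt (m k : ℝ))
      (tendsto_const_nhds.div_atTop hsm)
    filter_upwards [hFb, hm.eventually_ge_atTop 1] with k hk hk1 x _
    have hm1 : (1:ℝ) ≤ (m k : ℝ) := by exact_mod_cast hk1
    have hsm1 : (1:ℝ) ≤ Real.sqrt (m k : ℝ) := by
      rw [show (1:ℝ) = Real.sqrt 1 by simp]
      exact Real.sqrt_le_sqrt hm1
    have hsmpos : 0 < Real.sqrt (m k:ℝ) := by linarith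
    rw [le_div_iff₀ hsmpos]
    calc |Fm k x - F x| * Real.sqrt (m k:ℝ)
        = |Real.sqrt (m k:ℝ) * (Fm k x - F x)| := by
          rw [abs_mul, abs_of_pos hsmpos]; ring
      _ ≤ M1 + 1 := hk x
  have hGnunif : TendstoUniformlyOn (fun k x => Gn k x) G atTop D := by
    apply tuo_of_bound (g := fun k => (M2 + 1) / Real.sqrt (n k : ℝ))
      (tendsto_const_nhds.div_atTop hsn)
    filter_upwards [hGb, hn.eventually_ge_atTop 1] with k hk hk1 x _
    have hn1 : (1:ℝ) ≤ (n k : ℝ) := by exact_mod_cast hk1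
    have hsn1 : (1:ℝ) ≤ Real.sqrt (n k : ℝ) := by
      rw [show (1:ℝ) = Real.sqrt 1 by simp]
      exact Real.sqrt_le_sqrt hn1
    have hsnpos : 0 < Real.sqrt (n k:ℝ) := by linarith
    rw [le_div_iff₀ hsnpos]
    calc |Gn k x - G x| * Real.sqrt (n k:ℝ)
        = |Real.sqrt (n k:ℝ) * (Gn k x - G x)| := by
          rw [abs_mul, abs_of_pos hsnpos]; ring
      _ ≤ M2 + 1 := hk x
  -- uniform convergence of the quadratic terms
  have hFbd : ∀ x ∈ D, |F x| ≤ 1 := fun x _ =>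
    abs_le.mpr ⟨by linarith [(hF01 x).1], (hF01 x).2⟩
  have hFbd' : ∀ x ∈ D, |1 - F x| ≤ 1 := fun x _ =>
    abs_le.mpr ⟨by linarith [(hF01 x).2], by linarith [(hF01 x).1]⟩
  have hGbd : ∀ x ∈ D, |G x| ≤ 1 := fun x _ =>
    abs_le.mpr ⟨by linarith [(hG01 x).1], (hG01 x).2⟩
  have hGbd' : ∀ x ∈ D, |1 - G x| ≤ 1 := fun x _ =>
    abs_le.mpr ⟨by linarith [(hG01 x).2], by linarith [(hG01 x).1]⟩
  have hFq : TendstoUniformlyOn (fun k x => Fm k x * (1 - Fm k x))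
      (fun x => F x * (1 - F x)) atTop D :=
    tuo_mul hFmunif (tuo_sub (tuo_self (fun _ => 1) D) hFmunif) hFbd hFbd'
  have hGq : TendstoUniformlyOn (fun k x => Gn k x * (1 - Gn k x))
      (fun x => G x * (1 - G x)) atTop D :=
    tuo_mul hGnunif (tuo_sub (tuo_self (fun _ => 1) D) hGnunif) hGbd hGbd'
  -- uniform convergence of vartheta
  have hFqbd : ∀ x ∈ D, |F x * (1 - F x)| ≤ 1 := fun x hx => by
    rw [abs_mul]
    calc |F x| * |1 - F x| ≤ 1 * 1 :=
      mul_le_mul (hFbd x hx) (hFbd' x hx) (abs_nonneg _) zero_le_one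
    _ = 1 := one_mul 1
  have hGqbd : ∀ x ∈ D, |G x * (1 - G x)| ≤ 1 := fun x hx => by
    rw [abs_mul]
    calc |G x| * |1 - G x| ≤ 1 * 1 :=
      mul_le_mul (hGbd x hx) (hGbd' x hx) (abs_nonneg _) zero_le_one
    _ = 1 := one_mul 1
  have hlam1 : ∀ x ∈ D, |(1 : ℝ) - lam| ≤ 1 := fun _ _ =>
    abs_le.mpr ⟨by linarith, by linarith⟩
  have hlam2 : ∀ x ∈ D, |lam| ≤ 1 := fun _ _ => abs_le.mpr ⟨by linarith, by linarith⟩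
  have hTheta : TendstoUniformlyOn (fun k x => vartheta (Fm k) (Gn k) (m k) (n k) x)
      (fun x => vartheta0 lam F G x) atTop D := by
    have t1 := tuo_mul (tuo_const hratio' D) hFq hlam1 hFqbd
    have t2 := tuo_mul (tuo_const hratio D) hGq hlam2 hGqbd
    exact tuo_add t1 t2
  -- lower bound of vartheta0
  have hlb : ∀ x ∈ D, c * (1 - c') ≤ vartheta0 lam F G x := by
    intro x hx
    obtain ⟨ha1, ha2⟩ := hFD x hx
    obtain ⟨hb1, hb2⟩ := hGD x hx
    have h1 : c * (1 - c') ≤ F x * (1 - F x) :=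
      mul_le_mul ha1 (by linarith) (by linarith) (by linarith)
    have h2 : c * (1 - c') ≤ G x * (1 - G x) :=
      mul_le_mul hb1 (by linarith) (by linarith) (by linarith)
    have e1 : 0 ≤ (1 - lam) * (F x * (1 - F x) - c * (1 - c')) :=
      mul_nonneg (by linarith) (by linarith)
    have e2 : 0 ≤ lam * (G x * (1 - G x) - c * (1 - c')) :=
      mul_nonneg (by linarith) (by linarith)
    unfold vartheta0
    nlinarith [e1, e2]
  have hd0 : 0 < c * (1 - c') := mul_pos hc (by linarith)
  -- second conclusion
  have hpart2 := tuo_inv_sqrt hd0 hTheta hlb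
  refine ⟨?_, hpart2⟩
  -- the numerator process
  have hA : TendstoUniformlyOn
      (fun k x => Real.sqrt ((n k:ℝ)/((m k:ℝ)+(n k:ℝ))) *
        (Real.sqrt (m k:ℝ) * (Fm k x - F x)))
      (fun x => Real.sqrt (1 - lam) * V1 (F x)) atTop D := by
    refine tuo_mul (C := M1 + 1) (tuo_const hs_lam' D)
      hFconv.tendstoUniformlyOn (fun x _ => ?_) (fun x _ => by linarith [hM1' x])
    rw [abs_of_nonneg (Real.sqrt_nonneg _)]
    calc Real.sqrt (1 - lam) ≤ Real.sqrt 1 := Real.sqrt_le_sqrt (by linarith)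
      _ = 1 := Real.sqrt_one
      _ ≤ M1 + 1 := by linarith
  have hB : TendstoUniformlyOn
      (fun k x => Real.sqrt ((m k:ℝ)/((m k:ℝ)+(n k:ℝ))) *
        (Real.sqrt (n k:ℝ) * (Gn k x - G x)))
      (fun x => Real.sqrt lam * V2 (G x)) atTop D := by
    refine tuo_mul (C := M2 + 1) (tuo_const hs_lam D)
      hGconv.tendstoUniformlyOn (fun x _ => ?_) (fun x _ => by linarith [hM2' x])
    rw [abs_of_nonneg (Real.sqrt_nonneg _)]
    calc Real.sqrt lam ≤ Real.sqrt 1 := Real.sqrt_le_sqrt (by linarith)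
      _ = 1 := Real.sqrt_one
      _ ≤ M2 + 1 := by linarith
  have hNum := tuo_sub hB hA
  -- bounds for the product step
  have hsl1 : Real.sqrt lam ≤ 1 :=
    le_trans (Real.sqrt_le_sqrt (by linarith)) (le_of_eq Real.sqrt_one)
  have hsl2 : Real.sqrt (1 - lam) ≤ 1 :=
    le_trans (Real.sqrt_le_sqrt (by linarith)) (le_of_eq Real.sqrt_one)
  set C : ℝ := M1 + M2 + (Real.sqrt (c * (1 - c')))⁻¹ + 1 with hCdef
  have hsd0 : 0 < Real.sqrt (c * (1 - c')) := Real.sqrt_pos.mpr hd0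
  have hinvnn : 0 ≤ (Real.sqrt (c * (1 - c')))⁻¹ := by positivity
  have hnumbd : ∀ x ∈ D,
      |Real.sqrt lam * V2 (G x) - Real.sqrt (1 - lam) * V1 (F x)| ≤ C := fun x hx => by
    have b1 : |Real.sqrt lam * V2 (G x)| ≤ M2 := by
      rw [abs_mul, abs_of_nonneg (Real.sqrt_nonneg _)]
      calc Real.sqrt lam * |V2 (G x)| ≤ 1 * M2 :=
        mul_le_mul hsl1 (hM2' x) (abs_nonneg _) zero_le_one
      _ = M2 := one_mul M2
    have b2 : |Real.sqrt (1 - lam) * V1 (F x)| ≤ M1 := by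
      rw [abs_mul, abs_of_nonneg (Real.sqrt_nonneg _)]
      calc Real.sqrt (1 - lam) * |V1 (F x)| ≤ 1 * M1 :=
        mul_le_mul hsl2 (hM1' x) (abs_nonneg _) zero_le_one
      _ = M1 := one_mul M1
    calc |Real.sqrt lam * V2 (G x) - Real.sqrt (1 - lam) * V1 (F x)|
        ≤ |Real.sqrt lam * V2 (G x)| + |Real.sqrt (1 - lam) * V1 (F x)| := abs_sub _ _
      _ ≤ C := by rw [hCdef]; linarith
  have hinvbd : ∀ x ∈ D, |(Real.sqrt (vartheta0 lam F G x))⁻¹| ≤ C := fun x hx => by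
    have h1 : Real.sqrt (c * (1 - c')) ≤ Real.sqrt (vartheta0 lam F G x) :=
      Real.sqrt_le_sqrt (hlb x hx)
    have h2 : 0 < Real.sqrt (vartheta0 lam F G x) := lt_of_lt_of_le hsd0 h1
    rw [abs_of_pos (by positivity)]
    calc (Real.sqrt (vartheta0 lam F G x))⁻¹ ≤ (Real.sqrt (c * (1 - c')))⁻¹ :=
        inv_anti₀ hsd0 h1
      _ ≤ C := by rw [hCdef]; linarith
  have hProd := tuo_mul hNum hpart2 hnumbd hinvbd
  -- subtract omega0 and identify the limit with 0
  have hEq0 : Set.EqOn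
      (fun x => (Real.sqrt lam * V2 (G x) - Real.sqrt (1 - lam) * V1 (F x)) *
        (Real.sqrt (vartheta0 lam F G x))⁻¹ - omega0 lam F G V1 V2 x)
      (fun _ => (0:ℝ)) D := fun x _ => by
    simp [omega0, vartheta0, div_eq_mul_inv]
  have hMain0 := (tuo_sub hProd (tuo_self (fun x => omega0 lam F G V1 V2 x) D)).congr_right hEq0
  -- identify the prelimit expressions
  refine hMain0.congr ?_
  filter_upwards [hmn] with k hk
  intro x hx
  have ha : (1:ℝ) ≤ (m k : ℝ) := by exact_mod_cast hk.1
  have hb : (1:ℝ) ≤ (n k : ℝ) := by exact_mod_cast hk.2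
  have ha0 : (0:ℝ) < (m k:ℝ) := by linarith
  have hb0 : (0:ℝ) < (n k:ℝ) := by linarith
  have hN : (0:ℝ) < (m k:ℝ) + (n k:ℝ) := by linarith
  have e1 : Real.sqrt ((n k:ℝ)/((m k:ℝ)+(n k:ℝ))) * Real.sqrt (m k:ℝ)
      = Real.sqrt ((m k:ℝ)*(n k:ℝ)/((m k:ℝ)+(n k:ℝ))) := by
    rw [← Real.sqrt_mul (by positivity), div_mul_eq_mul_div, mul_comm (n k:ℝ) (m k:ℝ)]
  have e2 : Real.sqrt ((m k:ℝ)/((m k:ℝ)+(n k:ℝ))) * Real.sqrt (n k:ℝ)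
      = Real.sqrt ((m k:ℝ)*(n k:ℝ)/((m k:ℝ)+(n k:ℝ))) := by
    rw [← Real.sqrt_mul (by positivity), div_mul_eq_mul_div]
  have e3 : (Real.sqrt (((m k:ℝ)+(n k:ℝ))/((m k:ℝ)*(n k:ℝ))))⁻¹
      = Real.sqrt ((m k:ℝ)*(n k:ℝ)/((m k:ℝ)+(n k:ℝ))) := by
    rw [← Real.sqrt_inv, inv_div]
  have hS : Fm k x * (1 - Fm k x) / (m k:ℝ) + Gn k x * (1 - Gn k x) / (n k:ℝ)
      = (((m k:ℝ)+(n k:ℝ))/((m k:ℝ)*(n k:ℝ))) *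
        vartheta (Fm k) (Gn k) (m k) (n k) x := by
    unfold vartheta
    field_simp
  have hω : omegaMN (Fm k) (Gn k) (m k) (n k) x
      = Real.sqrt ((m k:ℝ)*(n k:ℝ)/((m k:ℝ)+(n k:ℝ))) * (Gn k x - Fm k x) *
        (Real.sqrt (vartheta (Fm k) (Gn k) (m k) (n k) x))⁻¹ := by
    unfold omegaMN
    rw [hS, Real.sqrt_mul (by positivity), div_eq_mul_inv, mul_inv, e3]
    ring
  beta_reduce
  rw [hω]
  linear_combination
    ((Real.sqrt (vartheta (Fm k) (Gn k) (m k) (n k) x))⁻¹ * (Gn k x - G x)) * e2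
    - ((Real.sqrt (vartheta (Fm k) (Gn k) (m k) (n k) x))⁻¹ * (Fm k x - F x)) * e1
end

section
/- Let 0 < b < B < ∞. For f, g ∈ 𝒫(b,B) define the influence functions ψ_f(x;f,g) = ½(1 − √(g(x)/f(x)) − H²(f,g))·1_{supp(f)}(x) and ψ_g(x;f,g) = ½(1 − √(f(x)/g(x)) − H²(f,g))·1_{supp(g)}(x). Then the squared Hellinger distance admits a first-order von Mises expansion on 𝒫(b,B): there is a constant C, depending only on b and B, such that for all f₁, f₂, g₁, g₂ ∈ 𝒫(b,B), |H²(f₂,g₂) − H²(f₁,g₁) − ∫ψ_f(x;f₁,g₁)f₂(x)dx − ∫ψ_g(x;f₁,g₁)g₂(x)dx| ≤ C(‖f₁−f₂‖₂² + ‖g₁−g₂‖₂²). -/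
open MeasureTheory

/-- A probability density on ℝ (with respect to Lebesgue measure). -/
def IsDensity (f : ℝ → ℝ) : Prop :=
  Measurable f ∧ (∀ x, 0 ≤ f x) ∧ ∫ x, f x = 1

/-- The class `𝒫(b,B)` of densities bounded between `b` and `B` on their support. -/
def memP (b B : ℝ) (f : ℝ → ℝ) : Prop :=
  IsDensity f ∧ ∀ x, 0 < f x → b ≤ f x ∧ f x ≤ B

/-- The squared Hellinger distance `H²(f,g) = ½∫(√f − √g)²`. -/
noncomputable def hell2 (f g : ℝ → ℝ) : ℝ :=
  (1 / 2) * ∫ x, (Real.sqrt (f x) - Real.sqrt (g x)) ^ 2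

/-- The influence function `ψ_f(x;f,g) = ½(1 − √(g(x)/f(x)) − H²(f,g))·1_{supp(f)}(x)`. -/
noncomputable def psiF (f g : ℝ → ℝ) : ℝ → ℝ :=
  Set.indicator {x | 0 < f x} (fun x => (1 / 2) * (1 - Real.sqrt (g x / f x) - hell2 f g))

/-- The influence function `ψ_g(x;f,g) = ½(1 − √(f(x)/g(x)) − H²(f,g))·1_{supp(g)}(x)`. -/
noncomputable def psiG (f g : ℝ → ℝ) : ℝ → ℝ :=
  Set.indicator {x | 0 < g x} (fun x => (1 / 2) * (1 - Real.sqrt (f x / g x) - hell2 f g))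

section Aux

lemma dens_integrable {f : ℝ → ℝ} (hf : IsDensity f) : Integrable f := by
  by_contra hc
  have h := hf.2.2
  rw [integral_undef hc] at h
  norm_num at h

lemma memP_le_B {b B : ℝ} {f : ℝ → ℝ} (hB : 0 ≤ B) (hf : memP b B f) (x : ℝ) : f x ≤ B := by
  rcases lt_or_eq_of_le (hf.1.2.1 x) with h | h
  · exact (hf.2 x h).2
  · rw [← h]; exact hB

lemma memP_sq_le {b B : ℝ} {f : ℝ → ℝ} (hB : 0 ≤ B) (hf : memP b B f) (x : ℝ) :
    f x ^ 2 ≤ B * f x := by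
  have h0 := hf.1.2.1 x
  have h1 := memP_le_B hB hf x
  nlinarith

lemma integrable_diff_sq {b B : ℝ} (hB : 0 ≤ B) {f g : ℝ → ℝ} (hf : memP b B f)
    (hg : memP b B g) : Integrable (fun x => (f x - g x) ^ 2) := by
  have hif := dens_integrable hf.1
  have hig := dens_integrable hg.1
  apply Integrable.mono' ((hif.add hig).const_mul (2*B))
  · exact ((hf.1.1.sub hg.1.1).pow_const 2).aestronglyMeasurable
  · filter_upwards with x
    have h1 := memP_sq_le hB hf x
    have h2 := memP_sq_le hB hg x
    have h3 := hf.1.2.1 x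
    have h4 := hg.1.2.1 x
    rw [Real.norm_eq_abs, abs_of_nonneg (by positivity : (0:ℝ) ≤ (f x - g x)^2)]
    simp only [Pi.add_apply]
    nlinarith

lemma sqrt_diff_sq_le {b p q : ℝ} (hb : 0 < b) (hp : b ≤ p) (hq : 0 ≤ q) :
    (Real.sqrt p - Real.sqrt q) ^ 2 ≤ (p - q) ^ 2 / b := by
  have hp0 : 0 ≤ p := le_trans hb.le hp
  have h1 : Real.sqrt p ^ 2 = p := Real.sq_sqrt hp0
  have h2 : Real.sqrt q ^ 2 = q := Real.sq_sqrt hq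
  have h3 : 0 ≤ Real.sqrt q := Real.sqrt_nonneg q
  have h4 : 0 ≤ Real.sqrt p := Real.sqrt_nonneg p
  have h5 : b ≤ (Real.sqrt p + Real.sqrt q) ^ 2 := by nlinarith
  have h6 : (Real.sqrt p - Real.sqrt q) ^ 2 * ((Real.sqrt p + Real.sqrt q) ^ 2)
      = (Real.sqrt p ^ 2 - Real.sqrt q ^ 2) ^ 2 := by ring
  rw [h1, h2] at h6
  rw [le_div_iff₀ hb]
  nlinarith [mul_le_mul_of_nonneg_left h5 (sq_nonneg (Real.sqrt p - Real.sqrt q))]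

set_option maxHeartbeats 1000000 in
lemma case1_bound {b B p q r s : ℝ} (hb : 0 < b)
    (hp : b ≤ p) (hpB : p ≤ B) (hr : b ≤ r) (hrB : r ≤ B) (hq : 0 ≤ q) (hs : 0 ≤ s) :
    0 ≤ Real.sqrt (r/p) * q + Real.sqrt (p/r) * s - 2 * Real.sqrt q * Real.sqrt s ∧
    Real.sqrt (r/p) * q + Real.sqrt (p/r) * s - 2 * Real.sqrt q * Real.sqrt s
      ≤ (2 * Real.sqrt (B/b) / b) * ((p - q) ^ 2 + (r - s) ^ 2) := by
  have hp0 : 0 < p := lt_of_lt_of_le hb hp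
  have hr0 : 0 < r := lt_of_lt_of_le hb hr
  set α := Real.sqrt (r/p) with hαdef
  have hα0 : 0 < α := Real.sqrt_pos.mpr (div_pos hr0 hp0)
  have hαinv : Real.sqrt (p/r) = α⁻¹ := by
    rw [hαdef, ← Real.sqrt_inv, inv_div]
  have hα2 : α ^ 2 = r / p := Real.sq_sqrt (div_nonneg hr0.le hp0.le)
  have hq2 : Real.sqrt q ^ 2 = q := Real.sq_sqrt hq
  have hs2 : Real.sqrt s ^ 2 = s := Real.sq_sqrt hs
  have hp2 : Real.sqrt p ^ 2 = p := Real.sq_sqrt hp0.le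
  have hr2 : Real.sqrt r ^ 2 = r := Real.sq_sqrt hr0.le
  have hαp : α * Real.sqrt p = Real.sqrt r := by
    rw [hαdef, ← Real.sqrt_mul (div_nonneg hr0.le hp0.le), div_mul_cancel₀ _ hp0.ne']
  have e0 : (α * Real.sqrt q - Real.sqrt s) ^ 2
      = α ^ 2 * Real.sqrt q ^ 2 - 2 * α * (Real.sqrt q * Real.sqrt s) + Real.sqrt s ^ 2 := by
    ring
  rw [hq2, hs2] at e0
  clear_value α
  have key : α * q + α⁻¹ * s - 2 * Real.sqrt q * Real.sqrt s
      = α⁻¹ * (α * Real.sqrt q - Real.sqrt s) ^ 2 := by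
    rw [e0]
    field_simp
    ring
  rw [hαinv]
  constructor
  · rw [key]; positivity
  · have h7 : α * Real.sqrt q - Real.sqrt s
        = α * (Real.sqrt q - Real.sqrt p) - (Real.sqrt s - Real.sqrt r) := by
      rw [← hαp]; ring
    have habs : (α * Real.sqrt q - Real.sqrt s) ^ 2
        ≤ 2 * α ^ 2 * (Real.sqrt q - Real.sqrt p) ^ 2 + 2 * (Real.sqrt s - Real.sqrt r) ^ 2 := by
      rw [h7]
      nlinarith [sq_nonneg (α * (Real.sqrt q - Real.sqrt p) + (Real.sqrt s - Real.sqrt r))]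
    set M := Real.sqrt (B/b) with hMdef
    have hM0 : 0 ≤ M := Real.sqrt_nonneg _
    have hαle : α ≤ M := by
      rw [hαdef, hMdef]
      apply Real.sqrt_le_sqrt
      rw [div_le_div_iff₀ hp0 hb]
      nlinarith
    have hαinvle : α⁻¹ ≤ M := by
      rw [← hαinv, hMdef]
      apply Real.sqrt_le_sqrt
      rw [div_le_div_iff₀ hr0 hb]
      nlinarith
    clear_value M
    have hAq : (Real.sqrt q - Real.sqrt p) ^ 2 ≤ (p - q) ^ 2 / b := by
      have h := sqrt_diff_sq_le hb hp hq
      have e : (Real.sqrt q - Real.sqrt p) ^ 2 = (Real.sqrt p - Real.sqrt q) ^ 2 := by ring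
      rw [e]; exact h
    have hCs : (Real.sqrt s - Real.sqrt r) ^ 2 ≤ (r - s) ^ 2 / b := by
      have h := sqrt_diff_sq_le hb hr hs
      have e : (Real.sqrt s - Real.sqrt r) ^ 2 = (Real.sqrt r - Real.sqrt s) ^ 2 := by ring
      rw [e]; exact h
    have s1 : α⁻¹ * (α * Real.sqrt q - Real.sqrt s) ^ 2
        ≤ 2 * α * (Real.sqrt q - Real.sqrt p) ^ 2 + 2 * α⁻¹ * (Real.sqrt s - Real.sqrt r) ^ 2 := by
      have := mul_le_mul_of_nonneg_left habs (inv_nonneg.mpr hα0.le)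
      calc α⁻¹ * (α * Real.sqrt q - Real.sqrt s) ^ 2
          ≤ α⁻¹ * (2 * α ^ 2 * (Real.sqrt q - Real.sqrt p) ^ 2
              + 2 * (Real.sqrt s - Real.sqrt r) ^ 2) := this
        _ = 2 * (α⁻¹ * α ^ 2) * (Real.sqrt q - Real.sqrt p) ^ 2
              + 2 * α⁻¹ * (Real.sqrt s - Real.sqrt r) ^ 2 := by ring
        _ = 2 * α * (Real.sqrt q - Real.sqrt p) ^ 2
              + 2 * α⁻¹ * (Real.sqrt s - Real.sqrt r) ^ 2 := by
            rw [sq, inv_mul_cancel_left₀ hα0.ne']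
    have s3 : 2 * α * (Real.sqrt q - Real.sqrt p) ^ 2 ≤ 2 * M * ((p - q) ^ 2 / b) := by
      have := mul_le_mul hαle hAq (sq_nonneg (Real.sqrt q - Real.sqrt p)) hM0
      linarith
    have s4 : 2 * α⁻¹ * (Real.sqrt s - Real.sqrt r) ^ 2 ≤ 2 * M * ((r - s) ^ 2 / b) := by
      have := mul_le_mul hαinvle hCs (sq_nonneg (Real.sqrt s - Real.sqrt r)) hM0
      linarith
    rw [key]
    calc α⁻¹ * (α * Real.sqrt q - Real.sqrt s) ^ 2
        ≤ 2 * M * ((p - q) ^ 2 / b) + 2 * M * ((r - s) ^ 2 / b) := by linarith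
      _ = (2 * M / b) * ((p - q) ^ 2 + (r - s) ^ 2) := by
          field_simp

lemma case2_core {b B q s : ℝ} (hb : 0 < b) (hq0 : 0 ≤ q) (hqB : q ≤ B)
    (hs : b ≤ s) (hsB : s ≤ B) :
    |s - 2 * Real.sqrt q * Real.sqrt s| ≤ (1/b + 2 * Real.sqrt B/(b * Real.sqrt b)) * s ^ 2 := by
  have hs0 : 0 < s := lt_of_lt_of_le hb hs
  have hsb : Real.sqrt b ≤ Real.sqrt s := Real.sqrt_le_sqrt hs
  have hb2 : 0 < Real.sqrt b := Real.sqrt_pos.mpr hb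
  have hss : Real.sqrt s * Real.sqrt s = s := Real.mul_self_sqrt hs0.le
  have hA : Real.sqrt s * Real.sqrt b ≤ s := by
    calc Real.sqrt s * Real.sqrt b ≤ Real.sqrt s * Real.sqrt s :=
          mul_le_mul_of_nonneg_left hsb (Real.sqrt_nonneg s)
      _ = s := hss
  have ht2 : s ≤ s ^ 2 / b := by
    rw [le_div_iff₀ hb]; nlinarith
  have hsle : Real.sqrt s ≤ s ^ 2 / (b * Real.sqrt b) := by
    rw [le_div_iff₀ (by positivity)]
    calc Real.sqrt s * (b * Real.sqrt b) = b * (Real.sqrt s * Real.sqrt b) := by ring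
      _ ≤ b * s := mul_le_mul_of_nonneg_left hA hb.le
      _ ≤ s ^ 2 := by nlinarith
  have hX : Real.sqrt q * Real.sqrt s ≤ Real.sqrt B * (s ^ 2 / (b * Real.sqrt b)) :=
    mul_le_mul (Real.sqrt_le_sqrt hqB) hsle (Real.sqrt_nonneg s) (Real.sqrt_nonneg B)
  have hX0 : 0 ≤ Real.sqrt q * Real.sqrt s := by positivity
  have e : (2 * Real.sqrt B/(b * Real.sqrt b)) * s ^ 2
      = 2 * (Real.sqrt B * (s ^ 2 / (b * Real.sqrt b))) := by ring
  have h1b : (0:ℝ) ≤ (1/b) * s ^ 2 := by positivity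
  rw [abs_le]
  constructor
  · have : (1/b) * s ^ 2 = s ^ 2 / b := by ring
    nlinarith
  · have : (1/b) * s ^ 2 = s ^ 2 / b := by ring
    nlinarith

lemma le_sq_div {b q : ℝ} (hb : 0 < b) (hq : 0 ≤ q) (hqb : 0 < q → b ≤ q) :
    q ≤ q ^ 2 / b := by
  rcases eq_or_lt_of_le hq with h | h
  · rw [← h]; positivity
  · rw [le_div_iff₀ hb]; nlinarith [hqb h]

set_option maxHeartbeats 1000000 in
lemma phi_bound {b B : ℝ} (hb : 0 < b) (hbB : b ≤ B) {p q r s : ℝ}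
    (hp : 0 ≤ p) (hpb : 0 < p → b ≤ p ∧ p ≤ B)
    (hq : 0 ≤ q) (hqb : 0 < q → b ≤ q ∧ q ≤ B)
    (hr : 0 ≤ r) (hrb : 0 < r → b ≤ r ∧ r ≤ B)
    (hs : 0 ≤ s) (hsb : 0 < s → b ≤ s ∧ s ≤ B) :
    |(Real.sqrt q - Real.sqrt s) ^ 2 - (if 0 < p then (1 - Real.sqrt (r/p)) * q else 0)
        - (if 0 < r then (1 - Real.sqrt (p/r)) * s else 0)|
      ≤ (2 * Real.sqrt (B/b) / b + 1/b + 2 * Real.sqrt B/(b * Real.sqrt b) + 1/b)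
          * ((p - q) ^ 2 + (r - s) ^ 2) := by
  have hq2 : Real.sqrt q ^ 2 = q := Real.sq_sqrt hq
  have hs2 : Real.sqrt s ^ 2 = s := Real.sq_sqrt hs
  have hK1 : (0:ℝ) ≤ 2 * Real.sqrt (B/b) / b := by positivity
  have hK2 : (0:ℝ) ≤ 1/b := by positivity
  have hK3 : (0:ℝ) ≤ 2 * Real.sqrt B/(b * Real.sqrt b) := by positivity
  have hsum1 : (0:ℝ) ≤ (p - q) ^ 2 := sq_nonneg _
  have hsum2 : (0:ℝ) ≤ (r - s) ^ 2 := sq_nonneg _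
  have hB0 : (0:ℝ) ≤ B := le_trans hb.le hbB
  have hqB : q ≤ B := by
    rcases eq_or_lt_of_le hq with h | h
    · rw [← h]; exact hB0
    · exact (hqb h).2
  have hsB : s ≤ B := by
    rcases eq_or_lt_of_le hs with h | h
    · rw [← h]; exact hB0
    · exact (hsb h).2
  by_cases hp1 : 0 < p <;> by_cases hr1 : 0 < r
  · rw [if_pos hp1, if_pos hr1]
    have expand : (Real.sqrt q - Real.sqrt s) ^ 2
        = Real.sqrt q ^ 2 + Real.sqrt s ^ 2 - 2 * Real.sqrt q * Real.sqrt s := by ring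
    rw [hq2, hs2] at expand
    have hval : (Real.sqrt q - Real.sqrt s) ^ 2 - (1 - Real.sqrt (r/p)) * q
          - (1 - Real.sqrt (p/r)) * s
        = Real.sqrt (r/p) * q + Real.sqrt (p/r) * s - 2 * Real.sqrt q * Real.sqrt s := by
      rw [expand]; ring
    obtain ⟨h0, h1⟩ := case1_bound hb (hpb hp1).1 (hpb hp1).2 (hrb hr1).1 (hrb hr1).2 hq hs
    rw [hval, abs_of_nonneg h0]
    nlinarith [mul_nonneg hK2 (add_nonneg hsum1 hsum2), mul_nonneg hK3 (add_nonneg hsum1 hsum2)]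
  · have hr0 : r = 0 := le_antisymm (not_lt.mp hr1) hr
    rw [if_pos hp1, if_neg hr1, hr0]
    rcases eq_or_lt_of_le hs with hs1 | hs1
    · rw [← hs1]
      simp only [Real.sqrt_zero, zero_div, mul_zero, sub_zero, mul_one]
      have hz : Real.sqrt q ^ 2 - 1 * q = 0 := by rw [hq2]; ring
      rw [hz, abs_zero]
      positivity
    · have hsb' := hsb hs1
      have hval : (Real.sqrt q - Real.sqrt s) ^ 2 - (1 - Real.sqrt (0/p)) * q - 0
          = s - 2 * Real.sqrt q * Real.sqrt s := by
        rw [zero_div, Real.sqrt_zero]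
        have expand : (Real.sqrt q - Real.sqrt s) ^ 2
            = Real.sqrt q ^ 2 + Real.sqrt s ^ 2 - 2 * Real.sqrt q * Real.sqrt s := by ring
        rw [hq2, hs2] at expand
        rw [expand]; ring
      rw [hval]
      have hcore := case2_core hb hq hqB hsb'.1 hsb'.2
      have hsq : s ^ 2 = (r - s) ^ 2 := by rw [hr0]; ring
      rw [hsq] at hcore
      nlinarith [mul_nonneg hK1 (add_nonneg hsum1 hsum2), mul_nonneg hK2 (add_nonneg hsum1 hsum2),
        mul_nonneg hK2 hsum1, mul_nonneg hK3 hsum1]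
  · have hp0 : p = 0 := le_antisymm (not_lt.mp hp1) hp
    rw [if_neg hp1, if_pos hr1, hp0]
    rcases eq_or_lt_of_le hq with hq1 | hq1
    · rw [← hq1]
      simp only [Real.sqrt_zero, zero_div, mul_zero, sub_zero, mul_one]
      have hz : (0 - Real.sqrt s) ^ 2 - 1 * s = 0 := by
        have e : (0 - Real.sqrt s) ^ 2 = Real.sqrt s ^ 2 := by ring
        rw [e, hs2]; ring
      rw [hz, abs_zero]
      positivity
    · have hqb' := hqb hq1
      have hval : (Real.sqrt q - Real.sqrt s) ^ 2 - 0 - (1 - Real.sqrt (0/r)) * s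
          = q - 2 * Real.sqrt s * Real.sqrt q := by
        rw [zero_div, Real.sqrt_zero]
        have expand : (Real.sqrt q - Real.sqrt s) ^ 2
            = Real.sqrt q ^ 2 + Real.sqrt s ^ 2 - 2 * Real.sqrt q * Real.sqrt s := by ring
        rw [hq2, hs2] at expand
        rw [expand]; ring
      rw [hval]
      have hcore := case2_core hb hs hsB hqb'.1 hqb'.2
      have hsq : q ^ 2 = (p - q) ^ 2 := by rw [hp0]; ring
      rw [hsq] at hcore
      nlinarith [mul_nonneg hK1 (add_nonneg hsum1 hsum2), mul_nonneg hK2 (add_nonneg hsum1 hsum2),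
        mul_nonneg hK2 hsum2, mul_nonneg hK3 hsum2]
  · have hp0 : p = 0 := le_antisymm (not_lt.mp hp1) hp
    have hr0 : r = 0 := le_antisymm (not_lt.mp hr1) hr
    rw [if_neg hp1, if_neg hr1, sub_zero, sub_zero]
    have h1 : (Real.sqrt q - Real.sqrt s) ^ 2 ≤ q + s := by
      have expand : (Real.sqrt q - Real.sqrt s) ^ 2
          = Real.sqrt q ^ 2 + Real.sqrt s ^ 2 - 2 * Real.sqrt q * Real.sqrt s := by ring
      rw [hq2, hs2] at expand
      nlinarith [mul_nonneg (Real.sqrt_nonneg q) (Real.sqrt_nonneg s)]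
    have h2 : q ≤ q ^ 2 / b := le_sq_div hb hq (fun h => (hqb h).1)
    have h3 : s ≤ s ^ 2 / b := le_sq_div hb hs (fun h => (hsb h).1)
    rw [abs_of_nonneg (sq_nonneg _)]
    have e2 : q ^ 2 = (p - q) ^ 2 := by rw [hp0]; ring
    have e3 : s ^ 2 = (r - s) ^ 2 := by rw [hr0]; ring
    rw [e2] at h2; rw [e3] at h3
    have ediv : (p - q) ^ 2 / b + (r - s) ^ 2 / b = (1/b) * ((p-q)^2 + (r-s)^2) := by ring
    nlinarith [mul_nonneg hK1 (add_nonneg hsum1 hsum2), mul_nonneg hK2 (add_nonneg hsum1 hsum2),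
      mul_nonneg hK3 (add_nonneg hsum1 hsum2)]

end Aux

set_option maxHeartbeats 2000000 in
theorem stmt_13 (b B : ℝ) (hb : 0 < b) (hB : b < B) :
    ∃ C : ℝ, 0 < C ∧ ∀ f₁ f₂ g₁ g₂ : ℝ → ℝ,
      memP b B f₁ → memP b B f₂ → memP b B g₁ → memP b B g₂ →
      |hell2 f₂ g₂ - hell2 f₁ g₁ - (∫ x, psiF f₁ g₁ x * f₂ x) - ∫ x, psiG f₁ g₁ x * g₂ x| ≤
        C * ((∫ x, (f₁ x - f₂ x) ^ 2) + ∫ x, (g₁ x - g₂ x) ^ 2) := by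

  refine ⟨(2 * Real.sqrt (B/b) / b + 1/b + 2 * Real.sqrt B/(b * Real.sqrt b) + 1/b + 1/b) / 2,
    by positivity, ?_⟩
  intro f₁ f₂ g₁ g₂ hf1 hf2 hg1 hg2
  have hB0 : (0:ℝ) ≤ B := le_trans hb.le hB.le
  have mf1 : Measurable f₁ := hf1.1.1
  have mf2 : Measurable f₂ := hf2.1.1
  have mg1 : Measurable g₁ := hg1.1.1
  have mg2 : Measurable g₂ := hg2.1.1
  have if1 : Integrable f₁ := dens_integrable hf1.1
  have if2 : Integrable f₂ := dens_integrable hf2.1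
  have ig1 : Integrable g₁ := dens_integrable hg1.1
  have ig2 : Integrable g₂ := dens_integrable hg2.1
  have iGf : Integrable (fun x => (f₁ x - f₂ x) ^ 2) := integrable_diff_sq hB0 hf1 hf2
  have iGg : Integrable (fun x => (g₁ x - g₂ x) ^ 2) := integrable_diff_sq hB0 hg1 hg2
  -- integrability of Hellinger integrands
  have hT1int : ∀ u v : ℝ → ℝ, memP b B u → memP b B v →
      Integrable (fun x => (Real.sqrt (u x) - Real.sqrt (v x)) ^ 2) := by
    intro u v hu hv
    apply Integrable.mono' ((dens_integrable hu.1).add (dens_integrable hv.1))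
    · exact (((Real.continuous_sqrt.measurable.comp hu.1.1).sub
        (Real.continuous_sqrt.measurable.comp hv.1.1)).pow_const 2).aestronglyMeasurable
    · filter_upwards with x
      have h1 : Real.sqrt (u x) ^ 2 = u x := Real.sq_sqrt (hu.1.2.1 x)
      have h2 : Real.sqrt (v x) ^ 2 = v x := Real.sq_sqrt (hv.1.2.1 x)
      rw [Real.norm_eq_abs, abs_of_nonneg (sq_nonneg _)]
      simp only [Pi.add_apply]
      nlinarith [mul_nonneg (Real.sqrt_nonneg (u x)) (Real.sqrt_nonneg (v x))]
  -- bounds on H₁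
  have hH10 : 0 ≤ hell2 f₁ g₁ := by
    unfold hell2
    have h := integral_nonneg (f := fun x => (Real.sqrt (f₁ x) - Real.sqrt (g₁ x)) ^ 2)
      (fun x => sq_nonneg (Real.sqrt (f₁ x) - Real.sqrt (g₁ x))) (μ := volume)
    linarith
  have hH11 : hell2 f₁ g₁ ≤ 1 := by
    unfold hell2
    have hle : ∫ x, (Real.sqrt (f₁ x) - Real.sqrt (g₁ x)) ^ 2 ≤ ∫ x, (f₁ x + g₁ x) := by
      apply integral_mono (hT1int f₁ g₁ hf1 hg1) (if1.add ig1)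
      intro x
      show (Real.sqrt (f₁ x) - Real.sqrt (g₁ x)) ^ 2 ≤ f₁ x + g₁ x
      have h1 : Real.sqrt (f₁ x) ^ 2 = f₁ x := Real.sq_sqrt (hf1.1.2.1 x)
      have h2 : Real.sqrt (g₁ x) ^ 2 = g₁ x := Real.sq_sqrt (hg1.1.2.1 x)
      nlinarith [mul_nonneg (Real.sqrt_nonneg (f₁ x)) (Real.sqrt_nonneg (g₁ x))]
    have h2 : ∫ x, (f₁ x + g₁ x) = 2 := by
      rw [integral_add if1 ig1, hf1.1.2.2, hg1.1.2.2]; norm_num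
    linarith
  set Kc := 2 * Real.sqrt (B/b) / b + 1/b + 2 * Real.sqrt B/(b * Real.sqrt b) + 1/b with hKc
  set Df := ∫ x, (f₁ x - f₂ x) ^ 2 with hDf
  set Dg := ∫ x, (g₁ x - g₂ x) ^ 2 with hDg
  have hDf0 : 0 ≤ Df := by rw [hDf]; exact integral_nonneg (fun x => sq_nonneg _)
  have hDg0 : 0 ≤ Dg := by rw [hDg]; exact integral_nonneg (fun x => sq_nonneg _)
  have hKc0 : 0 ≤ Kc := by rw [hKc]; positivity
  have hbinv : (0:ℝ) ≤ 1/b := by positivity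
  -- the correction function Φ
  set Φ : ℝ → ℝ := fun x =>
    (Real.sqrt (f₂ x) - Real.sqrt (g₂ x)) ^ 2
      - (if 0 < f₁ x then (1 - Real.sqrt (g₁ x / f₁ x)) * f₂ x else 0)
      - (if 0 < g₁ x then (1 - Real.sqrt (f₁ x / g₁ x)) * g₂ x else 0) with hΦdef
  set wF : ℝ → ℝ := fun x => if 0 < f₁ x then 0 else f₂ x with hwF
  set wG : ℝ → ℝ := fun x => if 0 < g₁ x then 0 else g₂ x with hwG
  have msetF : MeasurableSet {x : ℝ | 0 < f₁ x} := measurableSet_lt measurable_const mf1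
  have msetG : MeasurableSet {x : ℝ | 0 < g₁ x} := measurableSet_lt measurable_const mg1
  have hΦbd : ∀ x, |Φ x| ≤ Kc * ((f₁ x - f₂ x) ^ 2 + (g₁ x - g₂ x) ^ 2) := by
    intro x
    rw [hΦdef, hKc]
    exact phi_bound hb hB.le (hf1.1.2.1 x) (hf1.2 x) (hf2.1.2.1 x) (hf2.2 x)
      (hg1.1.2.1 x) (hg1.2 x) (hg2.1.2.1 x) (hg2.2 x)
  have mΦ : Measurable Φ := by
    rw [hΦdef]
    apply Measurable.sub
    apply Measurable.sub
    · exact ((Real.continuous_sqrt.measurable.comp mf2).sub (Real.continuous_sqrt.measurable.comp mg2)).pow_const 2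
    · exact Measurable.ite msetF
        ((measurable_const.sub (Real.continuous_sqrt.measurable.comp (mg1.div mf1))).mul mf2)
        measurable_const
    · exact Measurable.ite msetG
        ((measurable_const.sub (Real.continuous_sqrt.measurable.comp (mf1.div mg1))).mul mg2)
        measurable_const
  have iΦ : Integrable Φ := by
    apply Integrable.mono' ((iGf.add iGg).const_mul Kc) mΦ.aestronglyMeasurable
    filter_upwards with x
    rw [Real.norm_eq_abs]
    have := hΦbd x
    simpa using this
  -- integrability of ψ terms
  have hpsiFbd : ∀ x, |psiF f₁ g₁ x * f₂ x| ≤ (2 + Real.sqrt (B/b)) * f₂ x := by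
    intro x
    have hf20 := hf2.1.2.1 x
    by_cases hx : 0 < f₁ x
    · have ha0 : 0 ≤ Real.sqrt (g₁ x / f₁ x) := Real.sqrt_nonneg _
      have haM : Real.sqrt (g₁ x / f₁ x) ≤ Real.sqrt (B/b) := by
        apply Real.sqrt_le_sqrt
        rw [div_le_div_iff₀ hx hb]
        nlinarith [memP_le_B hB0 hg1 x, (hf1.2 x hx).1, hg1.1.2.1 x]
      have hM0 : 0 ≤ Real.sqrt (B/b) := Real.sqrt_nonneg _
      have hpsi : psiF f₁ g₁ x = (1/2) * (1 - Real.sqrt (g₁ x / f₁ x) - hell2 f₁ g₁) := by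
        simp only [psiF, Set.indicator_apply, Set.mem_setOf_eq, if_pos hx]
      rw [hpsi, abs_mul, abs_of_nonneg hf20]
      apply mul_le_mul_of_nonneg_right _ hf20
      rw [abs_le]
      constructor <;> nlinarith
    · have hpsi : psiF f₁ g₁ x = 0 := by
        simp only [psiF, Set.indicator_apply, Set.mem_setOf_eq, if_neg hx]
      rw [hpsi, zero_mul, abs_zero]
      positivity
  have hpsiGbd : ∀ x, |psiG f₁ g₁ x * g₂ x| ≤ (2 + Real.sqrt (B/b)) * g₂ x := by
    intro x
    have hg20 := hg2.1.2.1 x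
    by_cases hx : 0 < g₁ x
    · have ha0 : 0 ≤ Real.sqrt (f₁ x / g₁ x) := Real.sqrt_nonneg _
      have haM : Real.sqrt (f₁ x / g₁ x) ≤ Real.sqrt (B/b) := by
        apply Real.sqrt_le_sqrt
        rw [div_le_div_iff₀ hx hb]
        nlinarith [memP_le_B hB0 hf1 x, (hg1.2 x hx).1, hf1.1.2.1 x]
      have hM0 : 0 ≤ Real.sqrt (B/b) := Real.sqrt_nonneg _
      have hpsi : psiG f₁ g₁ x = (1/2) * (1 - Real.sqrt (f₁ x / g₁ x) - hell2 f₁ g₁) := by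
        simp only [psiG, Set.indicator_apply, Set.mem_setOf_eq, if_pos hx]
      rw [hpsi, abs_mul, abs_of_nonneg hg20]
      apply mul_le_mul_of_nonneg_right _ hg20
      rw [abs_le]
      constructor <;> nlinarith
    · have hpsi : psiG f₁ g₁ x = 0 := by
        simp only [psiG, Set.indicator_apply, Set.mem_setOf_eq, if_neg hx]
      rw [hpsi, zero_mul, abs_zero]
      positivity
  have mpsiF : Measurable (psiF f₁ g₁) := by
    apply Measurable.indicator _ msetF
    exact measurable_const.mul ((measurable_const.sub
      (Real.continuous_sqrt.measurable.comp (mg1.div mf1))).sub measurable_const)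
  have mpsiG : Measurable (psiG f₁ g₁) := by
    apply Measurable.indicator _ msetG
    exact measurable_const.mul ((measurable_const.sub
      (Real.continuous_sqrt.measurable.comp (mf1.div mg1))).sub measurable_const)
  have iT2 : Integrable (fun x => psiF f₁ g₁ x * f₂ x) := by
    apply Integrable.mono' (if2.const_mul (2 + Real.sqrt (B/b)))
      (mpsiF.mul mf2).aestronglyMeasurable
    filter_upwards with x
    rw [Real.norm_eq_abs]
    exact hpsiFbd x
  have iT3 : Integrable (fun x => psiG f₁ g₁ x * g₂ x) := by
    apply Integrable.mono' (ig2.const_mul (2 + Real.sqrt (B/b)))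
      (mpsiG.mul mg2).aestronglyMeasurable
    filter_upwards with x
    rw [Real.norm_eq_abs]
    exact hpsiGbd x
  -- the escaping-mass functions
  have iwF : Integrable wF := by
    apply Integrable.mono' if2 (by
      rw [hwF]
      exact (Measurable.ite msetF measurable_const mf2).aestronglyMeasurable)
    filter_upwards with x
    rw [Real.norm_eq_abs, hwF]
    by_cases hx : 0 < f₁ x
    · simp only [if_pos hx, abs_zero]; exact hf2.1.2.1 x
    · simp only [if_neg hx]; rw [abs_of_nonneg (hf2.1.2.1 x)]
  have iwG : Integrable wG := by
    apply Integrable.mono' ig2 (by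
      rw [hwG]
      exact (Measurable.ite msetG measurable_const mg2).aestronglyMeasurable)
    filter_upwards with x
    rw [Real.norm_eq_abs, hwG]
    by_cases hx : 0 < g₁ x
    · simp only [if_pos hx, abs_zero]; exact hg2.1.2.1 x
    · simp only [if_neg hx]; rw [abs_of_nonneg (hg2.1.2.1 x)]
  set mF := ∫ x, wF x with hmF
  set mG := ∫ x, wG x with hmG
  have hmF0 : 0 ≤ mF := by
    rw [hmF]
    apply integral_nonneg
    intro x
    rw [hwF]
    by_cases hx : 0 < f₁ x
    · simp [if_pos hx]
    · simp only [if_neg hx]; exact hf2.1.2.1 x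
  have hmG0 : 0 ≤ mG := by
    rw [hmG]
    apply integral_nonneg
    intro x
    rw [hwG]
    by_cases hx : 0 < g₁ x
    · simp [if_pos hx]
    · simp only [if_neg hx]; exact hg2.1.2.1 x
  have hmFle : mF ≤ (1/b) * Df := by
    rw [hmF, hDf]
    have h := integral_mono iwF (iGf.const_mul (1/b)) (fun x => ?_)
    · rwa [integral_const_mul] at h
    · rw [hwF]
      by_cases hx : 0 < f₁ x
      · simp only [if_pos hx]; positivity
      · simp only [if_neg hx]
        have hx0 : f₁ x = 0 := le_antisymm (not_lt.mp hx) (hf1.1.2.1 x)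
        have h1 : f₂ x ≤ f₂ x ^ 2 / b := le_sq_div hb (hf2.1.2.1 x) (fun h => (hf2.2 x h).1)
        have h2 : (f₁ x - f₂ x) ^ 2 = f₂ x ^ 2 := by rw [hx0]; ring
        have h3 : (1:ℝ)/b * (f₁ x - f₂ x) ^ 2 = f₂ x ^ 2 / b := by rw [h2]; ring
        linarith
  have hmGle : mG ≤ (1/b) * Dg := by
    rw [hmG, hDg]
    have h := integral_mono iwG (iGg.const_mul (1/b)) (fun x => ?_)
    · rwa [integral_const_mul] at h
    · rw [hwG]
      by_cases hx : 0 < g₁ x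
      · simp only [if_pos hx]; positivity
      · simp only [if_neg hx]
        have hx0 : g₁ x = 0 := le_antisymm (not_lt.mp hx) (hg1.1.2.1 x)
        have h1 : g₂ x ≤ g₂ x ^ 2 / b := le_sq_div hb (hg2.1.2.1 x) (fun h => (hg2.2 x h).1)
        have h2 : (g₁ x - g₂ x) ^ 2 = g₂ x ^ 2 := by rw [hx0]; ring
        have h3 : (1:ℝ)/b * (g₁ x - g₂ x) ^ 2 = g₂ x ^ 2 / b := by rw [h2]; ring
        linarith
  -- the key pointwise identity
  have hident : (fun x => (1/2) * (Real.sqrt (f₂ x) - Real.sqrt (g₂ x)) ^ 2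
        - psiF f₁ g₁ x * f₂ x - psiG f₁ g₁ x * g₂ x)
      = (fun x => (1/2) * Φ x + (1/2) * hell2 f₁ g₁ * (f₂ x + g₂ x)
        - (1/2) * hell2 f₁ g₁ * (wF x + wG x)) := by
    funext x
    rw [hΦdef, hwF, hwG]
    simp only [psiF, psiG, Set.indicator_apply, Set.mem_setOf_eq]
    by_cases h1 : 0 < f₁ x <;> by_cases h2 : 0 < g₁ x <;>
      simp only [if_pos, if_neg, h1, h2, if_true, if_false] <;> ring
  -- expand the two integrals
  have hLexp : ∫ x, ((1/2) * (Real.sqrt (f₂ x) - Real.sqrt (g₂ x)) ^ 2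
        - psiF f₁ g₁ x * f₂ x - psiG f₁ g₁ x * g₂ x)
      = hell2 f₂ g₂ - (∫ x, psiF f₁ g₁ x * f₂ x) - ∫ x, psiG f₁ g₁ x * g₂ x := by
    have i0 : Integrable (fun x => (1/2) * (Real.sqrt (f₂ x) - Real.sqrt (g₂ x)) ^ 2) :=
      (hT1int f₂ g₂ hf2 hg2).const_mul (1/2)
    have i1 : Integrable (fun x => (1/2) * (Real.sqrt (f₂ x) - Real.sqrt (g₂ x)) ^ 2
        - psiF f₁ g₁ x * f₂ x) := i0.sub iT2
    rw [integral_sub i1 iT3, integral_sub i0 iT2, integral_const_mul]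
    rfl
  have hRexp : ∫ x, ((1/2) * Φ x + (1/2) * hell2 f₁ g₁ * (f₂ x + g₂ x)
        - (1/2) * hell2 f₁ g₁ * (wF x + wG x))
      = (1/2) * (∫ x, Φ x) + hell2 f₁ g₁ - (1/2) * hell2 f₁ g₁ * (mF + mG) := by
    have j0 : Integrable (fun x => (1/2) * Φ x) := iΦ.const_mul (1/2)
    have j1 : Integrable (fun x => (1/2) * hell2 f₁ g₁ * (f₂ x + g₂ x)) :=
      (if2.add ig2).const_mul ((1/2) * hell2 f₁ g₁)
    have j2 : Integrable (fun x => (1/2) * hell2 f₁ g₁ * (wF x + wG x)) :=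
      (iwF.add iwG).const_mul ((1/2) * hell2 f₁ g₁)
    have j3 : Integrable (fun x => (1/2) * Φ x + (1/2) * hell2 f₁ g₁ * (f₂ x + g₂ x)) :=
      j0.add j1
    rw [integral_sub j3 j2, integral_add j0 j1,
      integral_const_mul, integral_const_mul, integral_const_mul,
      integral_add if2 ig2, integral_add iwF iwG, hf2.1.2.2, hg2.1.2.2, ← hmF, ← hmG]
    ring
  have hEQ : hell2 f₂ g₂ - hell2 f₁ g₁ - (∫ x, psiF f₁ g₁ x * f₂ x)
        - ∫ x, psiG f₁ g₁ x * g₂ x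
      = (1/2) * (∫ x, Φ x) - (1/2) * hell2 f₁ g₁ * (mF + mG) := by
    have hmid : ∫ x, ((1/2) * (Real.sqrt (f₂ x) - Real.sqrt (g₂ x)) ^ 2
          - psiF f₁ g₁ x * f₂ x - psiG f₁ g₁ x * g₂ x)
        = ∫ x, ((1/2) * Φ x + (1/2) * hell2 f₁ g₁ * (f₂ x + g₂ x)
          - (1/2) * hell2 f₁ g₁ * (wF x + wG x)) := by rw [hident]
    have h := (hLexp.symm.trans hmid).trans hRexp
    linarith
  -- bounds on ∫ Φ
  have iKG : Integrable (fun x => Kc * ((f₁ x - f₂ x) ^ 2 + (g₁ x - g₂ x) ^ 2)) :=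
    (iGf.add iGg).const_mul Kc
  have iKGn : Integrable (fun x => -(Kc * ((f₁ x - f₂ x) ^ 2 + (g₁ x - g₂ x) ^ 2))) := iKG.neg
  have hΦub : ∫ x, Φ x ≤ Kc * (Df + Dg) := by
    have h := integral_mono iΦ iKG
      (fun x => le_trans (le_abs_self _) (hΦbd x))
    rwa [integral_const_mul, integral_add iGf iGg, ← hDf, ← hDg] at h
  have hΦlb : -(Kc * (Df + Dg)) ≤ ∫ x, Φ x := by
    have h := integral_mono iKGn iΦ
      (fun x => by
        have := (abs_le.mp (hΦbd x)).1
        exact this)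
    rwa [integral_neg, integral_const_mul, integral_add iGf iGg, ← hDf, ← hDg] at h
  have hprod : hell2 f₁ g₁ * (mF + mG) ≤ (1/b) * Df + (1/b) * Dg := by
    nlinarith [mul_nonneg hbinv hDf0, mul_nonneg hbinv hDg0]
  have hprod0 : 0 ≤ hell2 f₁ g₁ * (mF + mG) := mul_nonneg hH10 (add_nonneg hmF0 hmG0)
  clear_value Kc Df Dg mF mG
  rw [hEQ, abs_le]
  have hKD : 0 ≤ (1/b) * (Df + Dg) := mul_nonneg hbinv (add_nonneg hDf0 hDg0)
  constructor <;> nlinarith [hΦub, hΦlb]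
end

section
/- Let p and q be probability densities on ℝ with cumulative distribution functions P and Q. Suppose there exist real numbers a ≤ c ≤ β such that p(x) = q(x) for all x < a and all x > β, q(x) ≥ p(x) for all x ∈ (a,c), and q(x) ≤ p(x) for all x ∈ (c,β). Then H²(p,q) ≤ 2 sup_{x∈ℝ}|P(x) − Q(x)|. -/
open MeasureTheory

lemma sqrt_sub_sq_le_abs {a b : ℝ} (ha : 0 ≤ a) (hb : 0 ≤ b) :
    (Real.sqrt a - Real.sqrt b) ^ 2 ≤ |a - b| := by
  rcases le_total a b with h | h
  · rw [abs_of_nonpos (by linarith)]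
    nlinarith [Real.sq_sqrt ha, Real.sq_sqrt hb, Real.sqrt_le_sqrt h,
      Real.sqrt_nonneg a, Real.sqrt_nonneg b]
  · rw [abs_of_nonneg (by linarith)]
    nlinarith [Real.sq_sqrt ha, Real.sq_sqrt hb, Real.sqrt_le_sqrt h,
      Real.sqrt_nonneg a, Real.sqrt_nonneg b]

theorem stmt_17 (p q : ℝ → ℝ) (hp : IsDensity p) (hq : IsDensity q)
    (a c β : ℝ) (hac : a ≤ c) (hcβ : c ≤ β)
    (h₁ : ∀ x, x < a → p x = q x) (h₂ : ∀ x, β < x → p x = q x)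
    (h₃ : ∀ x ∈ Set.Ioo a c, p x ≤ q x) (h₄ : ∀ x ∈ Set.Ioo c β, q x ≤ p x) :
    hell2 p q ≤ 2 * ⨆ x : ℝ, |(∫ t in Set.Iic x, p t) - ∫ t in Set.Iic x, q t| := by
  obtain ⟨hpm, hp0, hp1⟩ := hp
  obtain ⟨hqm, hq0, hq1⟩ := hq
  have hpint : Integrable p := by
    by_contra h; rw [integral_undef h] at hp1; norm_num at hp1
  have hqint : Integrable q := by
    by_contra h; rw [integral_undef h] at hq1; norm_num at hq1
  set r : ℝ → ℝ := fun x => p x - q x with hrdef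
  have hrint : Integrable r := hpint.sub hqint
  have habs : Integrable (fun x => |r x|) := hrint.abs
  -- R x = P x - Q x
  set R : ℝ → ℝ := fun x => ∫ t in Set.Iic x, r t with hRdef
  have hReq : ∀ x, R x = (∫ t in Set.Iic x, p t) - ∫ t in Set.Iic x, q t := by
    intro x
    simp only [hRdef, hrdef]
    exact integral_sub hpint.integrableOn hqint.integrableOn
  -- step A : hell2 ≤ (1/2) ∫ |r|
  have hsqm : Measurable (fun x => (Real.sqrt (p x) - Real.sqrt (q x)) ^ 2) :=
    (hpm.sqrt.sub hqm.sqrt).pow_const 2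
  have hptwise : ∀ x, (Real.sqrt (p x) - Real.sqrt (q x)) ^ 2 ≤ |r x| := fun x =>
    sqrt_sub_sq_le_abs (hp0 x) (hq0 x)
  have hsqint : Integrable (fun x => (Real.sqrt (p x) - Real.sqrt (q x)) ^ 2) := by
    refine habs.mono' hsqm.aestronglyMeasurable (Filter.Eventually.of_forall fun x => ?_)
    rw [Real.norm_eq_abs, abs_of_nonneg (sq_nonneg _)]
    exact hptwise x
  have stepA : hell2 p q ≤ (1/2) * ∫ x, |r x| := by
    unfold hell2
    have := integral_mono hsqint habs hptwise
    linarith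
  -- step B : ∫ |r| = -(∫ Ioo a c, r) ... ; a.e. equality with indicator function
  have hnull : (volume : Measure ℝ) ({a, c, β} : Set ℝ) = 0 :=
    (Set.toFinite _).measure_zero _
  have hae : ∀ᵐ x : ℝ, x ∉ ({a, c, β} : Set ℝ) := measure_eq_zero_iff_ae_notMem.mp hnull
  set g : ℝ → ℝ := (Set.Ioo a c).indicator (fun x => -r x) + (Set.Ioo c β).indicator r
    with hgdef
  have haeg : (fun x => |r x|) =ᵐ[volume] g := by
    filter_upwards [hae] with x hx
    simp only [Set.mem_insert_iff, Set.mem_singleton_iff, not_or] at hx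
    obtain ⟨hxa, hxc, hxβ⟩ := hx
    simp only [hgdef, Pi.add_apply, Set.indicator_apply, Set.mem_Ioo]
    rcases lt_trichotomy x a with h | h | h
    · have : r x = 0 := by simp [hrdef, h₁ x h]
      rw [this]
      rw [if_neg (by intro hh; linarith [hh.1]), if_neg (by intro hh; linarith [hh.1])]
      simp
    · exact absurd h hxa
    · rcases lt_trichotomy x c with h' | h' | h'
      · have hr0 : r x ≤ 0 := by
          have := h₃ x ⟨h, h'⟩; simp [hrdef]; linarith
        rw [if_pos ⟨h, h'⟩, if_neg (by intro hh; linarith [hh.1])]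
        rw [abs_of_nonpos hr0]; ring
      · exact absurd h' hxc
      · rcases lt_trichotomy x β with h'' | h'' | h''
        · have hr0 : 0 ≤ r x := by
            have := h₄ x ⟨h', h''⟩; simp [hrdef]; linarith
          rw [if_neg (by intro hh; linarith [hh.2]), if_pos ⟨h', h''⟩]
          rw [abs_of_nonneg hr0]; ring
        · exact absurd h'' hxβ
        · have : r x = 0 := by simp [hrdef, h₂ x h'']
          rw [this]
          rw [if_neg (by intro hh; linarith [hh.2]), if_neg (by intro hh; linarith [hh.2])]
          simp
  have hint1 : Integrable ((Set.Ioo a c).indicator (fun x => -r x)) :=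
    hrint.neg.indicator measurableSet_Ioo
  have hint2 : Integrable ((Set.Ioo c β).indicator r) :=
    hrint.indicator measurableSet_Ioo
  have stepB : ∫ x, |r x| = (∫ x in Set.Ioo a c, -r x) + ∫ x in Set.Ioo c β, r x := by
    rw [integral_congr_ae haeg, hgdef]
    simp only [Pi.add_apply]
    rw [integral_add hint1 hint2, integral_indicator measurableSet_Ioo,
      integral_indicator measurableSet_Ioo]
  -- step C/D : values of R
  have hRa : R a = 0 := by
    simp only [hRdef]
    have : ∀ᵐ x : ℝ, x ∈ Set.Iic a → r x = 0 := by
      filter_upwards [hae] with x hx hxa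
      simp only [Set.mem_insert_iff, Set.mem_singleton_iff, not_or] at hx
      have : x < a := lt_of_le_of_ne hxa hx.1
      simp [hrdef, h₁ x this]
    rw [setIntegral_congr_ae measurableSet_Iic this, integral_zero]
  have hrtot : ∫ x, r x = 0 := by
    simp only [hrdef]
    rw [integral_sub hpint hqint, hp1, hq1]; ring
  have hIoiβ : ∫ x in Set.Ioi β, r x = 0 := by
    have : ∀ᵐ x : ℝ, x ∈ Set.Ioi β → r x = 0 :=
      Filter.Eventually.of_forall fun x hx => by simp [hrdef, h₂ x hx]
    rw [setIntegral_congr_ae measurableSet_Ioi this, integral_zero]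
  have hRβ : R β = 0 := by
    have hu : ∫ x, r x = R β + ∫ x in Set.Ioi β, r x := by
      simp only [hRdef]
      rw [← setIntegral_union (Set.Iic_disjoint_Ioi le_rfl) measurableSet_Ioi
        hrint.integrableOn hrint.integrableOn, Set.Iic_union_Ioi, setIntegral_univ]
    rw [hrtot, hIoiβ] at hu
    linarith
  have hsplit1 : R c = R a + ∫ x in Set.Ioo a c, r x := by
    simp only [hRdef]
    rw [← integral_Ioc_eq_integral_Ioo,
      ← setIntegral_union (Set.Iic_disjoint_Ioc le_rfl) measurableSet_Ioc
        hrint.integrableOn hrint.integrableOn, Set.Iic_union_Ioc_eq_Iic hac]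
  have hsplit2 : R β = R c + ∫ x in Set.Ioo c β, r x := by
    simp only [hRdef]
    rw [← integral_Ioc_eq_integral_Ioo,
      ← setIntegral_union (Set.Iic_disjoint_Ioc le_rfl) measurableSet_Ioc
        hrint.integrableOn hrint.integrableOn, Set.Iic_union_Ioc_eq_Iic hcβ]
  have hIoo1 : ∫ x in Set.Ioo a c, -r x = -R c := by
    have : ∫ x in Set.Ioo a c, -r x = -∫ x in Set.Ioo a c, r x := integral_neg r
    rw [this]; rw [hRa] at hsplit1; linarith
  have hIoo2 : ∫ x in Set.Ioo c β, r x = -R c := by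
    rw [hRβ] at hsplit2; linarith
  have habs_eq : ∫ x, |r x| = -2 * R c := by
    rw [stepB, hIoo1, hIoo2]; ring
  -- final comparison with sup
  set S : ℝ → ℝ := fun x => |(∫ t in Set.Iic x, p t) - ∫ t in Set.Iic x, q t| with hSdef
  have hSR : ∀ x, S x = |R x| := fun x => by rw [hSdef, hReq]
  have hbdd : BddAbove (Set.range S) := by
    refine ⟨∫ x, |r x|, ?_⟩
    rintro _ ⟨x, rfl⟩
    rw [hSR]
    simp only [hRdef]
    calc |∫ t in Set.Iic x, r t| ≤ ∫ t in Set.Iic x, |r t| := by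
          simpa [Real.norm_eq_abs] using
            norm_integral_le_integral_norm (μ := volume.restrict (Set.Iic x)) r
      _ ≤ ∫ t, |r t| := setIntegral_le_integral habs
          (Filter.Eventually.of_forall fun t => abs_nonneg _)
  have hle1 : S c ≤ ⨆ x, S x := le_ciSup hbdd c
  have hle0 : (0:ℝ) ≤ ⨆ x, S x := le_trans (abs_nonneg _) (le_ciSup hbdd 0)
  have hRc : -R c ≤ S c := by rw [hSR]; exact neg_le_abs _
  calc hell2 p q ≤ (1/2) * ∫ x, |r x| := stepA
    _ = -R c := by rw [habs_eq]; ring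
    _ ≤ S c := hRc
    _ ≤ ⨆ x, S x := hle1
    _ ≤ 2 * ⨆ x, S x := by linarith
end
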